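/- arXiv:2402.11352 — 5 statements merged into one kernel-verified Lean document; each statement's English description precedes it below -/
import Mathlib

section
/- Let ν be a Borel probability measure on (0,∞) and, for each S > 0, let μ(S) > 0 be the unique water level, i.e., ∫ max(1/μ(S) − 1/λ, 0) dν(λ) = S. Then lim_{S→∞} S·μ(S) = 1. Equivalently, lim_{μ→0⁺} μ·∫ max(1/μ − 1/λ, 0) dν(λ) = 1. -/
open MeasureTheory Real Filter

/-- **High-SNR behavior of the waterfilling threshold.** For a Borel probability measure
`ν` on `(0,∞)`, if `μ(S) > 0` is the water level at every `S > 0`, i.e.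
`∫ max (1/μ(S) - 1/λ) 0 dν = S`, then `S · μ(S) → 1` as `S → ∞`; equivalently,
`μ · ∫ max (1/μ - 1/λ) 0 dν → 1` as `μ → 0⁺`. -/
theorem waterlevel_highSNR
    (ν : Measure ℝ) [IsProbabilityMeasure ν] (hν : ν (Set.Iic 0) = 0)
    (μfun : ℝ → ℝ)
    (hμ : ∀ S : ℝ, 0 < S → 0 < μfun S ∧ ∫ l, max (1 / μfun S - 1 / l) 0 ∂ν = S) :
    Tendsto (fun S => S * μfun S) atTop (nhds 1) ∧
    Tendsto (fun μ : ℝ => μ * ∫ l, max (1 / μ - 1 / l) 0 ∂ν)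
      (nhdsWithin 0 (Set.Ioi 0)) (nhds 1) := by
  have haepos : ∀ᵐ l ∂ν, l ∈ Set.Ioi (0:ℝ) := by
    rw [ae_iff]
    convert hν using 2
    ext l; simp [Set.mem_Ioi, not_lt]
  have hG : Tendsto (fun μ : ℝ => ∫ l, max (1 - μ / l) 0 ∂ν)
      (nhdsWithin 0 (Set.Ioi 0)) (nhds 1) := by
    have h := tendsto_integral_filter_of_dominated_convergence (μ := ν)
      (l := nhdsWithin 0 (Set.Ioi 0))
      (F := fun (μ : ℝ) (l : ℝ) => max (1 - μ / l) 0) (f := fun _ => (1:ℝ))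
      (bound := fun _ => 1)
      (by
        filter_upwards with μ
        exact ((measurable_const.sub (measurable_const.div
          measurable_id)).max measurable_const).aestronglyMeasurable)
      (by
        filter_upwards [self_mem_nhdsWithin] with μ hμ'
        filter_upwards [haepos] with l hl
        have h1 : 0 ≤ μ / l := div_nonneg (le_of_lt hμ') hl.le
        rw [Real.norm_eq_abs, abs_of_nonneg (le_max_right _ _)]
        exact max_le (by linarith) zero_le_one)
      (integrable_const 1)
      (by
        filter_upwards [haepos] with l hl
        have hc : ContinuousAt (fun μ : ℝ => max (1 - μ / l) 0) 0 :=
          ((continuous_const.sub (continuous_id.div_const l)).max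
            continuous_const).continuousAt
        have ht : Tendsto (fun μ : ℝ => max (1 - μ / l) 0)
            (nhdsWithin 0 (Set.Ioi 0)) (nhds (max (1 - 0 / l) 0)) :=
          hc.tendsto.mono_left nhdsWithin_le_nhds
        simpa using ht)
    simpa using h
  have key : ∀ μ : ℝ, 0 < μ →
      μ * ∫ l, max (1 / μ - 1 / l) 0 ∂ν = ∫ l, max (1 - μ / l) 0 ∂ν := by
    intro μ hμ'
    rw [← integral_const_mul]
    congr 1; funext l
    rw [mul_max_of_nonneg _ _ hμ'.le, mul_zero, mul_sub,
      mul_one_div_cancel hμ'.ne', mul_one_div]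
  have part2 : Tendsto (fun μ : ℝ => μ * ∫ l, max (1 / μ - 1 / l) 0 ∂ν)
      (nhdsWithin 0 (Set.Ioi 0)) (nhds 1) := by
    refine hG.congr' ?_
    filter_upwards [self_mem_nhdsWithin] with μ hμ'
    exact (key μ hμ').symm
  have hbound : ∀ S : ℝ, 0 < S → μfun S ≤ 1 / S := by
    intro S hS
    obtain ⟨hp, he⟩ := hμ S hS
    have hle : (∫ l, max (1 / μfun S - 1 / l) 0 ∂ν) ≤ 1 / μfun S := by
      have hconst : (1:ℝ) / μfun S = ∫ _, (1:ℝ) / μfun S ∂ν := by simp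
      rw [hconst]
      apply integral_mono_of_nonneg
      · filter_upwards with l
        exact le_max_right _ _
      · exact integrable_const _
      · filter_upwards [haepos] with l hl
        have h1 : 0 ≤ 1 / l := div_nonneg zero_le_one hl.le
        have h2 : 0 ≤ 1 / μfun S := div_nonneg zero_le_one hp.le
        exact max_le (by linarith) h2
    rw [he] at hle
    rw [le_div_iff₀ hp] at hle
    rw [le_div_iff₀ hS]
    nlinarith
  have hμto : Tendsto μfun atTop (nhdsWithin 0 (Set.Ioi 0)) := by
    rw [tendsto_nhdsWithin_iff]
    constructor
    · apply squeeze_zero'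
      · filter_upwards [eventually_gt_atTop 0] with S hS
        exact (hμ S hS).1.le
      · filter_upwards [eventually_gt_atTop 0] with S hS
        exact hbound S hS
      · have : Tendsto (fun S : ℝ => 1 / S) atTop (nhds 0) := by
          simpa only [one_div] using tendsto_inv_atTop_zero
        exact this
    · filter_upwards [eventually_gt_atTop 0] with S hS
      exact (hμ S hS).1
  have part1 : Tendsto (fun S => S * μfun S) atTop (nhds 1) := by
    have h := part2.comp hμto
    refine h.congr' ?_
    filter_upwards [eventually_gt_atTop 0] with S hS
    simp only [Function.comp]
    rw [(hμ S hS).2, mul_comm]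
  exact ⟨part1, part2⟩
end

section
/- Let ν be a Borel probability measure on (0,∞) with ∫ |log λ| dν(λ) < ∞, and for each S > 0 let μ(S) > 0 be the unique water level, i.e., ∫ max(1/μ(S) − 1/λ, 0) dν(λ) = S. Then lim_{S→∞} [ ∫ max(log(λ/μ(S)), 0) dν(λ) − log S ] = ∫ log λ dν(λ). That is, at high SNR the waterfilling capacity equals log S plus the mean log-channel-gain, up to a vanishing error. -/
open MeasureTheory Real Filter

/-!
Multiplying the water-level equation by `μ = μ(S)` gives `S μ = ∫ max (1 - μ/λ) 0 dν`, an
integral of a function with values in `[0, 1]`. Hence `μ ≤ 1/S → 0`, and then, by dominated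
convergence, `S μ → 1`. On the other hand `max (log (λ/μ)) 0 = max (log λ) (log μ) - log μ`, so
`C(S) - log S = ∫ max (log λ) (log μ) dν - log (S μ)`; for `μ ≤ 1` the integrand is dominated by
`|log λ|` and converges to `log λ` as `μ → 0`.
-/

open Set Topology

section Waterfilling

variable {ν : Measure ℝ}

lemma ae_pos_of_measure_Iic_zero (hν : ν (Iic 0) = 0) : ∀ᵐ l ∂ν, 0 < l := by
  rw [ae_iff]
  exact measure_mono_null (fun l hl => not_lt.1 hl) hν

lemma abs_max_le_abs_of_nonpos {a b : ℝ} (hb : b ≤ 0) : |max a b| ≤ |a| := by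
  rcases le_total a b with hab | hba
  · rw [max_eq_right hab, abs_of_nonpos hb, abs_of_nonpos (hab.trans hb)]
    linarith
  · rw [max_eq_left hba]

lemma max_one_sub_div_le_one {m l : ℝ} (hm : 0 ≤ m) (hl : 0 ≤ l) : max (1 - m / l) 0 ≤ 1 :=
  max_le (by linarith [div_nonneg hm hl]) zero_le_one

lemma integral_max_one_sub_div_le_one [IsProbabilityMeasure ν] (hν : ν (Iic 0) = 0)
    {m : ℝ} (hm : 0 ≤ m) : ∫ l, max (1 - m / l) 0 ∂ν ≤ 1 := by
  calc ∫ l, max (1 - m / l) 0 ∂ν ≤ ∫ _, (1 : ℝ) ∂ν := by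
        refine integral_mono_of_nonneg (ae_of_all _ fun l => le_max_right _ _)
          (integrable_const 1) ?_
        filter_upwards [ae_pos_of_measure_Iic_zero hν] with l hl
        exact max_one_sub_div_le_one hm hl.le
    _ = 1 := by simp

lemma tendsto_integral_max_one_sub_div [IsProbabilityMeasure ν] (hν : ν (Iic 0) = 0)
    {ι : Type*} {L : Filter ι} [L.IsCountablyGenerated] {f : ι → ℝ}
    (hf : Tendsto f L (𝓝[≥] 0)) :
    Tendsto (fun i => ∫ l, max (1 - f i / l) 0 ∂ν) L (𝓝 1) := by
  have hf0 : Tendsto f L (𝓝 0) := (tendsto_nhdsWithin_iff.1 hf).1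
  have hlim (l : ℝ) : Tendsto (fun i => max (1 - f i / l) 0) L (𝓝 1) := by
    simpa using ((hf0.div_const l).const_sub 1).max (tendsto_const_nhds (x := (0 : ℝ)))
  have := tendsto_integral_filter_of_dominated_convergence (μ := ν) (fun _ => 1) ?_ ?_
    (integrable_const 1) (ae_of_all _ hlim)
  · simpa using this
  · exact Eventually.of_forall fun i => by fun_prop
  · filter_upwards [(tendsto_nhdsWithin_iff.1 hf).2] with i hi
    filter_upwards [ae_pos_of_measure_Iic_zero hν] with l hl
    rw [Real.norm_of_nonneg (le_max_right _ _)]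
    exact max_one_sub_div_le_one (mem_Ici.1 hi) hl.le

lemma tendsto_integral_max_log_log (hlog : Integrable (fun l => log l) ν)
    {ι : Type*} {L : Filter ι} [L.IsCountablyGenerated] {f : ι → ℝ}
    (hf : Tendsto f L (𝓝[>] 0)) :
    Tendsto (fun i => ∫ l, max (log l) (log (f i)) ∂ν) L (𝓝 (∫ l, log l ∂ν)) := by
  have hlogf : Tendsto (fun i => log (f i)) L atBot := tendsto_log_nhdsGT_zero.comp hf
  refine tendsto_integral_filter_of_dominated_convergence (fun l => |log l|)
    (Eventually.of_forall fun i => ?_) ?_ hlog.abs (ae_of_all _ fun l => ?_)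
  · exact (measurable_log.max measurable_const).aestronglyMeasurable
  · filter_upwards [hlogf.eventually_le_atBot 0] with i hi
    exact ae_of_all _ fun l => abs_max_le_abs_of_nonpos hi
  · refine tendsto_const_nhds.congr' ?_
    filter_upwards [hlogf.eventually_le_atBot (log l)] with i hi
    exact (max_eq_left hi).symm

lemma integral_max_log_div [IsProbabilityMeasure ν] (hν : ν (Iic 0) = 0)
    (hlog : Integrable (fun l => log l) ν) {m : ℝ} (hm : 0 < m) :
    ∫ l, max (log (l / m)) 0 ∂ν = (∫ l, max (log l) (log m) ∂ν) - log m := by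
  have hint : Integrable (fun l => max (log l) (log m)) ν := hlog.sup (integrable_const _)
  calc ∫ l, max (log (l / m)) 0 ∂ν = ∫ l, (max (log l) (log m) - log m) ∂ν := by
        refine integral_congr_ae ?_
        filter_upwards [ae_pos_of_measure_Iic_zero hν] with l hl
        rw [log_div hl.ne' hm.ne', ← max_sub_sub_right, sub_self]
    _ = _ := by simp [integral_sub hint (integrable_const _)]

def IsWaterLevel (ν : Measure ℝ) (S m : ℝ) : Prop :=
  0 < m ∧ ∫ l, max (1 / m - 1 / l) 0 ∂ν = S

lemma IsWaterLevel.mul_eq {S m : ℝ} (h : IsWaterLevel ν S m) :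
    S * m = ∫ l, max (1 - m / l) 0 ∂ν := by
  rw [← h.2, mul_comm, ← integral_const_mul]
  congr 1 with l
  rw [mul_max_of_nonneg _ _ h.1.le, mul_sub, mul_one_div_cancel h.1.ne', mul_one_div, mul_zero]

lemma IsWaterLevel.le_inv [IsProbabilityMeasure ν] (hν : ν (Iic 0) = 0) {S m : ℝ}
    (h : IsWaterLevel ν S m) (hS : 0 < S) : m ≤ S⁻¹ := by
  rw [le_inv_comm₀ h.1 hS, ← one_div, le_div_iff₀ h.1, h.mul_eq]
  exact integral_max_one_sub_div_le_one hν h.1.le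

variable [IsProbabilityMeasure ν] {μfun : ℝ → ℝ}

lemma tendsto_waterLevel_nhdsGT_zero (hν : ν (Iic 0) = 0)
    (hμ : ∀ᶠ S in atTop, IsWaterLevel ν S (μfun S)) : Tendsto μfun atTop (𝓝[>] 0) := by
  refine tendsto_nhdsWithin_iff.2
    ⟨squeeze_zero' ?_ ?_ tendsto_inv_atTop_zero, hμ.mono fun _ h => h.1⟩
  · exact hμ.mono fun _ h => h.1.le
  · filter_upwards [hμ, eventually_gt_atTop 0] with S h hS
    exact h.le_inv hν hS

lemma tendsto_mul_waterLevel (hν : ν (Iic 0) = 0)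
    (hμ : ∀ᶠ S in atTop, IsWaterLevel ν S (μfun S)) :
    Tendsto (fun S => S * μfun S) atTop (𝓝 1) := by
  refine (tendsto_integral_max_one_sub_div hν
    (tendsto_nhdsWithin_mono_right Ioi_subset_Ici_self
      (tendsto_waterLevel_nhdsGT_zero hν hμ))).congr' ?_
  filter_upwards [hμ] with S h
  exact h.mul_eq.symm

end Waterfilling

/-- **High-SNR expansion of the waterfilling capacity.** Let `ν` be a Borel probability
measure on `(0,∞)` with `∫ |log λ| dν < ∞`, and for each `S > 0` let `μ(S) > 0` be the
water level, i.e. `∫ max (1/μ(S) - 1/λ) 0 dν = S`. Then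
`∫ max (log (λ/μ(S))) 0 dν - log S → ∫ log λ dν` as `S → ∞`. -/
theorem waterfilling_capacity_highSNR
    (ν : Measure ℝ) [IsProbabilityMeasure ν] (hν : ν (Set.Iic 0) = 0)
    (hlog : Integrable (fun l => Real.log l) ν)
    (μfun : ℝ → ℝ)
    (hμ : ∀ S : ℝ, 0 < S → 0 < μfun S ∧ ∫ l, max (1 / μfun S - 1 / l) 0 ∂ν = S) :
    Tendsto (fun S => (∫ l, max (Real.log (l / μfun S)) 0 ∂ν) - Real.log S)
      atTop (nhds (∫ l, Real.log l ∂ν)) := by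
  have hw : ∀ᶠ S in atTop, IsWaterLevel ν S (μfun S) := (eventually_gt_atTop 0).mono hμ
  have hlogSm : Tendsto (fun S => log (S * μfun S)) atTop (𝓝 0) := by
    simpa [Function.comp_def] using
      (continuousAt_log one_ne_zero).tendsto.comp (tendsto_mul_waterLevel hν hw)
  have hlim := (tendsto_integral_max_log_log hlog (tendsto_waterLevel_nhdsGT_zero hν hw)).sub
    hlogSm
  rw [sub_zero] at hlim
  refine hlim.congr' ?_
  filter_upwards [hw, eventually_gt_atTop 0] with S h hS
  rw [integral_max_log_div hν hlog h.1, log_mul hS.ne' h.1.ne']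
  ring
end

section
/- Let a, b, ξ > 0, 0 < A₀ ≤ 1, and k ∈ {1, 2}. Let ν be the law of I = X·Y·W, where X, Y, W are independent, X Gamma-distributed with shape a and rate a, Y Gamma-distributed with shape b and rate b, and W with the pointing-error density with parameters ξ and A₀. For each S > 0 let μ(S) > 0 be the unique water level of ν at S, and let C̄(S) = (1/k)·∫ max(log(λ/μ(S)), 0) dν(λ) be the waterfilling capacity. Then lim_{S→∞} [ C̄(S) − (1/k) log S ] = (1/k)·[ log(A₀/(a·b)) + ψ(a) + ψ(b) − 1/ξ² ]. -/
open MeasureTheory Real Filter ProbabilityTheory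

/-- The digamma function `ψ(s) = d/ds log Γ(s)`. -/
noncomputable def digamma (s : ℝ) : ℝ :=
  deriv (fun t : ℝ => Real.log (Real.Gamma t)) s

/-- The pointing-error distribution with parameters `ξ > 0` and `A₀ ∈ (0,1]`:
density `ξ²/A₀^{ξ²} · x^{ξ²-1}` on `(0, A₀)` and `0` elsewhere. -/
noncomputable def pointingErrorMeasure (ξ A₀ : ℝ) : Measure ℝ :=
  MeasureTheory.volume.withDensity fun x =>
    if x ∈ Set.Ioo 0 A₀ then ENNReal.ofReal (ξ ^ 2 / A₀ ^ (ξ ^ 2) * x ^ (ξ ^ 2 - 1)) else 0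

open Set
open scoped ENNReal NNReal

lemma abs_log_le {x ε : ℝ} (hx : 0 < x) (hε : 0 < ε) :
    |Real.log x| ≤ ε⁻¹ * (x ^ ε + x ^ (-ε)) := by
  have hxε : 0 < x ^ ε := Real.rpow_pos_of_pos hx ε
  have h1 : Real.log (x ^ ε) ≤ x ^ ε := (Real.log_le_sub_one_of_pos hxε).trans (by linarith)
  have h2 : -Real.log (x ^ ε) ≤ x ^ (-ε) := by
    rw [← Real.log_inv, ← Real.rpow_neg hx.le]
    exact (Real.log_le_sub_one_of_pos (Real.rpow_pos_of_pos hx _)).trans (by linarith [Real.rpow_pos_of_pos hx (-ε)])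
  have hlog : |Real.log (x ^ ε)| ≤ x ^ ε + x ^ (-ε) := by
    rcases abs_cases (Real.log (x ^ ε)) with ⟨h, _⟩ | ⟨h, _⟩ <;> rw [h] <;>
      nlinarith [Real.rpow_pos_of_pos hx ε, Real.rpow_pos_of_pos hx (-ε)]
  rw [Real.log_rpow hx, abs_mul, abs_of_pos hε] at hlog
  calc |Real.log x| = ε⁻¹ * (ε * |Real.log x|) := by field_simp
  _ ≤ ε⁻¹ * (x ^ ε + x ^ (-ε)) := by
      apply mul_le_mul_of_nonneg_left _ (inv_nonneg.mpr hε.le); linarith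

lemma integrableOn_rpow_exp_log {s b : ℝ} (hs : -1 < s) (hb : 0 < b) :
    IntegrableOn (fun x => x ^ s * Real.exp (-(b * x)) * Real.log x) (Set.Ioi (0:ℝ)) := by
  set ε : ℝ := (s + 1) / 2 with hεdef
  have hε : 0 < ε := by simp only [hεdef]; linarith
  have key : ∀ t : ℝ, -1 < t → IntegrableOn (fun x => x ^ t * Real.exp (-(b * x))) (Set.Ioi (0:ℝ)) := by
    intro t ht
    have := integrableOn_rpow_mul_exp_neg_mul_rpow (p := 1) ht zero_lt_one hb
    refine this.congr_fun (fun x hx => ?_) measurableSet_Ioi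
    simp only [Real.rpow_one]; ring_nf
  have h1 := key (s + ε) (by linarith)
  have h2 := key (s - ε) (by simp only [hεdef]; linarith)
  have hg : IntegrableOn (fun x => ε⁻¹ * (x ^ (s + ε) * Real.exp (-(b * x)) + x ^ (s - ε) * Real.exp (-(b * x)))) (Set.Ioi (0:ℝ)) :=
    ((h1.add h2).const_mul _)
  refine hg.mono' ?_ ?_
  · refine ContinuousOn.aestronglyMeasurable ?_ measurableSet_Ioi
    intro x hx
    have hx' : (x:ℝ) ≠ 0 := ne_of_gt hx
    exact ((continuousWithinAt_id.rpow_const (Or.inl hx')).mul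
      (((continuous_const.mul continuous_id).neg.rexp).continuousWithinAt)).mul
      ((Real.continuousAt_log hx').continuousWithinAt)
  · filter_upwards [ae_restrict_mem measurableSet_Ioi] with x (hx : 0 < x)
    have hex : 0 < Real.exp (-(b * x)) := Real.exp_pos _
    have hxs : 0 < x ^ s := Real.rpow_pos_of_pos hx s
    rw [norm_eq_abs, abs_mul, abs_of_pos (mul_pos hxs hex)]
    calc x ^ s * Real.exp (-(b * x)) * |Real.log x|
        ≤ x ^ s * Real.exp (-(b * x)) * (ε⁻¹ * (x ^ ε + x ^ (-ε))) := by
          exact mul_le_mul_of_nonneg_left (abs_log_le hx hε) (by positivity)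
      _ = ε⁻¹ * (x ^ (s + ε) * Real.exp (-(b * x)) + x ^ (s - ε) * Real.exp (-(b * x))) := by
          rw [Real.rpow_add hx, Real.rpow_sub hx, Real.rpow_neg hx.le, div_eq_mul_inv]; ring

lemma hasDerivAt_Gamma_real {a : ℝ} (ha : 0 < a) :
    HasDerivAt Real.Gamma (∫ t in Set.Ioi (0:ℝ), t ^ (a - 1) * (Real.log t * Real.exp (-t))) a := by
  have h1 : HasDerivAt Complex.GammaIntegral
      (∫ t : ℝ in Set.Ioi 0, (t:ℂ) ^ ((a:ℂ) - 1) * (Real.log t * Real.exp (-t))) a := by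
    exact Complex.hasDerivAt_GammaIntegral (by simpa using ha)
  have heq : Complex.GammaIntegral =ᶠ[nhds (a:ℂ)] Complex.Gamma := by
    have hopen : IsOpen {s : ℂ | 0 < s.re} := isOpen_lt continuous_const Complex.continuous_re
    filter_upwards [hopen.mem_nhds (by simpa using ha)] with s hs
    exact (Complex.Gamma_eq_integral hs).symm
  have h2 : HasDerivAt Complex.Gamma
      (∫ t : ℝ in Set.Ioi 0, (t:ℂ) ^ ((a:ℂ) - 1) * (Real.log t * Real.exp (-t))) a :=
    h1.congr_of_eventuallyEq heq.symm
  have h3 := h2.real_of_complex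
  have hfun : (fun x : ℝ => (Complex.Gamma (x:ℂ)).re) = Real.Gamma := by
    funext x; rw [Complex.Gamma_ofReal, Complex.ofReal_re]
  have hint : (∫ t : ℝ in Set.Ioi 0, (t:ℂ) ^ ((a:ℂ) - 1) * (Real.log t * Real.exp (-t)))
      = ((∫ t in Set.Ioi (0:ℝ), t ^ (a - 1) * (Real.log t * Real.exp (-t)) : ℝ) : ℂ) := by
    have h4 : (∫ t in Set.Ioi (0:ℝ), ((t ^ (a - 1) * (Real.log t * Real.exp (-t)) : ℝ) : ℂ))
        = ((∫ t in Set.Ioi (0:ℝ), t ^ (a - 1) * (Real.log t * Real.exp (-t)) : ℝ) : ℂ) :=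
      integral_ofReal
    rw [← h4]
    refine setIntegral_congr_fun measurableSet_Ioi (fun t ht => ?_)
    rw [show ((a:ℂ) - 1) = ((a - 1 : ℝ) : ℂ) by push_cast; ring,
      ← Complex.ofReal_cpow (le_of_lt ht)]
    push_cast
    ring
  rw [hfun] at h3
  rw [hint] at h3
  simpa using h3

lemma digamma_eq {a : ℝ} (ha : 0 < a) :
    digamma a = (∫ t in Set.Ioi (0:ℝ), t ^ (a - 1) * (Real.log t * Real.exp (-t))) / Real.Gamma a := by
  have hG := hasDerivAt_Gamma_real ha
  have hpos := Real.Gamma_pos_of_pos ha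
  have h := (Real.hasDerivAt_log hpos.ne').comp a hG
  have h' : HasDerivAt (fun t : ℝ => Real.log (Real.Gamma t))
      ((Real.Gamma a)⁻¹ * ∫ t in Set.Ioi (0:ℝ), t ^ (a - 1) * (Real.log t * Real.exp (-t))) a := h
  rw [digamma, h'.deriv, inv_mul_eq_div]

lemma integral_rpow_exp_log {a r : ℝ} (ha : 0 < a) (hr : 0 < r) :
    ∫ x in Set.Ioi (0:ℝ), x ^ (a - 1) * Real.exp (-(r * x)) * Real.log x
      = (r ^ (a-1) : ℝ)⁻¹ * (r⁻¹ * ((∫ t in Set.Ioi (0:ℝ), t ^ (a - 1) * (Real.log t * Real.exp (-t)))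
          - Real.log r * Real.Gamma a)) := by
  have key := integral_comp_mul_left_Ioi
    (fun y => y ^ (a - 1) * Real.exp (-y) * (Real.log y - Real.log r)) 0 hr
  rw [mul_zero] at key
  have hL : ∫ x in Set.Ioi (0:ℝ),
      (fun y => y ^ (a-1) * Real.exp (-y) * (Real.log y - Real.log r)) (r * x)
      = r ^ (a-1) * ∫ x in Set.Ioi (0:ℝ), x ^ (a - 1) * Real.exp (-(r * x)) * Real.log x := by
    rw [← integral_const_mul]
    refine setIntegral_congr_fun measurableSet_Ioi (fun x hx => ?_)
    have hx : (0:ℝ) < x := hx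
    simp only
    rw [Real.log_mul hr.ne' hx.ne', Real.mul_rpow hr.le hx.le]
    ring_nf
  have hR : (∫ y in Set.Ioi (0:ℝ), y ^ (a-1) * Real.exp (-y) * (Real.log y - Real.log r))
      = (∫ t in Set.Ioi (0:ℝ), t ^ (a - 1) * (Real.log t * Real.exp (-t))) - Real.log r * Real.Gamma a := by
    have h1 : IntegrableOn (fun y : ℝ => y ^ (a-1) * Real.exp (-(1 * y)) * Real.log y) (Set.Ioi 0) :=
      integrableOn_rpow_exp_log (by linarith) one_pos
    have h1' : IntegrableOn (fun y : ℝ => y ^ (a-1) * Real.exp (-y) * Real.log y) (Set.Ioi 0) := by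
      simpa only [one_mul] using h1
    have h2 : IntegrableOn (fun y : ℝ => Real.log r * (Real.exp (-y) * y ^ (a-1))) (Set.Ioi 0) :=
      (Real.GammaIntegral_convergent ha).const_mul _
    have hsplit : (∫ y in Set.Ioi (0:ℝ), y ^ (a-1) * Real.exp (-y) * (Real.log y - Real.log r))
        = (∫ y in Set.Ioi (0:ℝ), y ^ (a-1) * Real.exp (-y) * Real.log y)
          - ∫ y in Set.Ioi (0:ℝ), Real.log r * (Real.exp (-y) * y ^ (a-1)) := by
      rw [← integral_sub h1' h2]
      refine setIntegral_congr_fun measurableSet_Ioi (fun y _ => ?_)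
      ring
    rw [hsplit, integral_const_mul, ← Real.Gamma_eq_integral ha]
    congr 1
    refine setIntegral_congr_fun measurableSet_Ioi (fun y _ => ?_)
    ring
  rw [hL, hR, smul_eq_mul] at key
  have hrpow : (r:ℝ) ^ (a-1) ≠ 0 := (Real.rpow_pos_of_pos hr _).ne'
  field_simp at key ⊢
  linarith [key]


lemma withDensity_ofReal_eq {f : ℝ → ℝ} :
    (volume.withDensity fun x => ENNReal.ofReal (f x))
      = volume.withDensity fun x => ((f x).toNNReal : ℝ≥0∞) := rfl

lemma integral_withDensity_ofReal {f g : ℝ → ℝ} (hf_meas : Measurable f) (hf : ∀ x, 0 ≤ f x) :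
    ∫ x, g x ∂(volume.withDensity fun x => ENNReal.ofReal (f x)) = ∫ x, f x * g x := by
  rw [withDensity_ofReal_eq, integral_withDensity_eq_integral_smul hf_meas.real_toNNReal g]
  congr 1; funext x
  simp [NNReal.smul_def, Real.coe_toNNReal _ (hf x)]

lemma integrable_withDensity_ofReal_iff {f g : ℝ → ℝ} (hf_meas : Measurable f) (hf : ∀ x, 0 ≤ f x) :
    Integrable g (volume.withDensity fun x => ENNReal.ofReal (f x))
      ↔ Integrable (fun x => f x * g x) volume := by
  rw [withDensity_ofReal_eq, integrable_withDensity_iff_integrable_smul hf_meas.real_toNNReal]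
  constructor <;> intro h <;> refine h.congr (Filter.Eventually.of_forall fun x => ?_) <;>
    simp [NNReal.smul_def, Real.coe_toNNReal _ (hf x)]

lemma gamma_pdf_mul_log_eq {a r : ℝ} (hr : 0 < r) :
    (fun x => gammaPDFReal a r x * Real.log x)
      = Set.indicator (Set.Ioi 0)
          (fun x => r ^ a / Real.Gamma a * (x ^ (a-1) * Real.exp (-(r * x)) * Real.log x)) := by
  funext x
  rcases lt_trichotomy x 0 with hx|hx|hx
  · rw [Set.indicator_of_notMem (by simpa using hx.not_gt), gammaPDFReal,
      if_neg (not_le.mpr hx), zero_mul]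
  · subst hx
    rw [Set.indicator_of_notMem (by simp), Real.log_zero, mul_zero]
  · rw [Set.indicator_of_mem (Set.mem_Ioi.mpr hx), gammaPDFReal, if_pos hx.le]; ring

lemma integrable_log_gammaMeasure {a r : ℝ} (ha : 0 < a) (hr : 0 < r) :
    Integrable Real.log (gammaMeasure a r) := by
  rw [show gammaMeasure a r = volume.withDensity fun x => ENNReal.ofReal (gammaPDFReal a r x) from rfl,
    integrable_withDensity_ofReal_iff (measurable_gammaPDFReal a r) (gammaPDFReal_nonneg ha hr),
    gamma_pdf_mul_log_eq hr, integrable_indicator_iff measurableSet_Ioi]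
  exact ((integrableOn_rpow_exp_log (by linarith) hr).const_mul _)

lemma integral_log_gammaMeasure {a r : ℝ} (ha : 0 < a) (hr : 0 < r) :
    ∫ x, Real.log x ∂(gammaMeasure a r) = digamma a - Real.log r := by
  rw [show gammaMeasure a r = volume.withDensity fun x => ENNReal.ofReal (gammaPDFReal a r x) from rfl,
    integral_withDensity_ofReal (measurable_gammaPDFReal a r) (gammaPDFReal_nonneg ha hr),
    gamma_pdf_mul_log_eq hr, integral_indicator measurableSet_Ioi, integral_const_mul,
    integral_rpow_exp_log ha hr, digamma_eq ha]
  have hΓ := Real.Gamma_pos_of_pos ha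
  have h1 : (r:ℝ) ^ (a-1) = r ^ a / r := by
    rw [Real.rpow_sub hr, Real.rpow_one]
  rw [h1]
  have h2 : (r:ℝ) ^ a ≠ 0 := (Real.rpow_pos_of_pos hr a).ne'
  field_simp

lemma integrableOn_rpow_log_Ioc {p A : ℝ} (hp : 0 < p) (hA : 0 < A) :
    IntegrableOn (fun x => x ^ (p-1) * Real.log x) (Set.Ioc 0 A) := by
  set ε : ℝ := p / 2 with hεdef
  have hε : 0 < ε := by positivity
  have key : ∀ t : ℝ, -1 < t → IntegrableOn (fun x : ℝ => x ^ t) (Set.Ioc 0 A) :=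
    fun t ht => (intervalIntegrable_iff_integrableOn_Ioc_of_le hA.le).mp
      (intervalIntegral.intervalIntegrable_rpow' ht)
  have h1 := key (p - 1 + ε) (by simp only [hεdef]; linarith)
  have h2 := key (p - 1 - ε) (by simp only [hεdef]; linarith)
  refine ((h1.add h2).const_mul ε⁻¹).mono' ?_ ?_
  · refine ContinuousOn.aestronglyMeasurable ?_ measurableSet_Ioc
    intro x hx
    have hx' : x ≠ 0 := ne_of_gt hx.1
    exact (continuousWithinAt_id.rpow_const (Or.inl hx')).mul
      (Real.continuousAt_log hx').continuousWithinAt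
  · filter_upwards [ae_restrict_mem measurableSet_Ioc] with x hx
    have hx0 : 0 < x := hx.1
    have hxs : 0 < x ^ (p-1) := Real.rpow_pos_of_pos hx0 _
    rw [norm_eq_abs, abs_mul, abs_of_pos hxs]
    calc x ^ (p-1) * |Real.log x| ≤ x ^ (p-1) * (ε⁻¹ * (x ^ ε + x ^ (-ε))) :=
          mul_le_mul_of_nonneg_left (abs_log_le hx0 hε) hxs.le
      _ = ε⁻¹ * (x ^ (p - 1 + ε) + x ^ (p - 1 - ε)) := by
          have e1 : x ^ (p - 1 + ε) = x ^ (p-1) * x ^ ε := Real.rpow_add hx0 _ _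
          have e2 : x ^ (p - 1 - ε) = x ^ (p-1) * x ^ (-ε) := by
            rw [← Real.rpow_add hx0]; ring_nf
          rw [e1, e2]; ring

lemma integral_rpow_log_Ioc {p A : ℝ} (hp : 0 < p) (hA : 0 < A) :
    ∫ x in Set.Ioc 0 A, x ^ (p-1) * Real.log x
      = A ^ p * Real.log A / p - A ^ p / p ^ 2 := by
  set F : ℝ → ℝ := fun x => x ^ p * Real.log x / p - x ^ p / p ^ 2 with hF
  have hderiv : ∀ x ∈ Set.Ioo (0:ℝ) A, HasDerivWithinAt F (x ^ (p-1) * Real.log x) (Set.Ioi x) x := by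
    intro x hx
    have hx0 : (0:ℝ) < x := hx.1
    have h1 : HasDerivAt (fun y : ℝ => y ^ p) (p * x ^ (p-1)) x :=
      Real.hasDerivAt_rpow_const (Or.inl hx0.ne')
    have h2 : HasDerivAt Real.log x⁻¹ x := Real.hasDerivAt_log hx0.ne'
    have h3 : HasDerivAt (fun y : ℝ => y ^ p * Real.log y)
        (p * x ^ (p-1) * Real.log x + x ^ p * x⁻¹) x := h1.mul h2
    have h4 : HasDerivAt F
        ((p * x ^ (p-1) * Real.log x + x ^ p * x⁻¹) / p - p * x ^ (p-1) / p ^ 2) x :=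
      (h3.div_const p).sub (h1.div_const (p^2))
    have hxx : x ^ p * x⁻¹ = x ^ (p-1) := by
      rw [Real.rpow_sub hx0, Real.rpow_one, div_eq_mul_inv]
    refine (HasDerivAt.hasDerivWithinAt ?_)
    refine h4.congr_deriv ?_
    rw [hxx]
    field_simp
    ring
  have hcont : ContinuousOn F (Set.Icc 0 A) := by
    intro x hx
    rcases eq_or_ne x 0 with rfl|hx0
    · have hzero : F 0 = 0 := by
        simp [hF, Real.zero_rpow hp.ne', Real.log_zero]
      have hg : Tendsto F (nhdsWithin 0 (Set.Ici 0)) (nhds 0) := by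
        have hIci : Set.Ici (0:ℝ) = {0} ∪ Set.Ioi 0 := by
          ext y; simp [le_iff_lt_or_eq, or_comm, eq_comm]
        rw [hIci, nhdsWithin_union]
        refine Tendsto.sup ?_ ?_
        · rw [nhdsWithin_singleton]
          simpa [hzero] using tendsto_pure_nhds F 0
        · have hmain : Tendsto (fun x : ℝ => Real.log x * x ^ p) (nhdsWithin 0 (Set.Ioi 0)) (nhds 0) :=
            tendsto_log_mul_rpow_nhdsGT_zero hp
          have hrpow : Tendsto (fun x : ℝ => x ^ p) (nhdsWithin 0 (Set.Ioi 0)) (nhds 0) := by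
            have := (Real.continuousAt_rpow_const 0 p (Or.inr hp.le)).continuousWithinAt
              (s := Set.Ioi (0:ℝ))
            simpa [Real.zero_rpow hp.ne', ContinuousWithinAt] using this
          have : Tendsto F (nhdsWithin 0 (Set.Ioi 0)) (nhds (0 / p - 0 / p ^ 2)) := by
            refine Tendsto.sub (Tendsto.div_const ?_ p) (Tendsto.div_const hrpow (p^2))
            simpa [mul_comm] using hmain
          simpa using this
      exact (hg.mono_left (nhdsWithin_mono _ (fun y hy => hy.1))).congr' (by
        filter_upwards with y using rfl) |>.mono_right (by rw [hzero])
    · have : ContinuousAt F x := by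
        have h1 : ContinuousAt (fun y : ℝ => y ^ p) x :=
          Real.continuousAt_rpow_const x p (Or.inl hx0)
        have h2 : ContinuousAt Real.log x := Real.continuousAt_log hx0
        exact ((h1.mul h2).div_const p).sub (h1.div_const (p^2))
      exact this.continuousWithinAt
  have hint : IntervalIntegrable (fun x => x ^ (p-1) * Real.log x) volume 0 A :=
    (intervalIntegrable_iff_integrableOn_Ioc_of_le hA.le).mpr (integrableOn_rpow_log_Ioc hp hA)
  have := intervalIntegral.integral_eq_sub_of_hasDeriv_right_of_le hA.le hcont hderiv hint
  rw [intervalIntegral.integral_of_le hA.le] at this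
  rw [this, hF]
  simp [Real.zero_rpow hp.ne', Real.log_zero]

noncomputable def ptDensity (ξ A₀ : ℝ) (x : ℝ) : ℝ :=
  if x ∈ Set.Ioo 0 A₀ then ξ ^ 2 / A₀ ^ (ξ ^ 2) * x ^ (ξ ^ 2 - 1) else 0

lemma measurable_ptDensity (ξ A₀ : ℝ) : Measurable (ptDensity ξ A₀) :=
  Measurable.ite measurableSet_Ioo ((measurable_id'.pow_const _).const_mul _) measurable_const

lemma ptDensity_nonneg {ξ A₀ : ℝ} (hξ : 0 < ξ) (hA : 0 < A₀) (x : ℝ) :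
    0 ≤ ptDensity ξ A₀ x := by
  rw [ptDensity]
  split_ifs with h
  · have hx : 0 < x := h.1
    have : (0:ℝ) < A₀ ^ (ξ ^ 2) := Real.rpow_pos_of_pos hA _
    positivity
  · exact le_refl 0

lemma pointingErrorMeasure_eq (ξ A₀ : ℝ) :
    pointingErrorMeasure ξ A₀ = volume.withDensity fun x => ENNReal.ofReal (ptDensity ξ A₀ x) := by
  rw [pointingErrorMeasure]
  congr 1
  funext x
  rw [ptDensity]
  split_ifs <;> simp

lemma integrable_log_pointing {ξ A₀ : ℝ} (hξ : 0 < ξ) (hA : 0 < A₀) :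
    Integrable Real.log (pointingErrorMeasure ξ A₀) := by
  rw [pointingErrorMeasure_eq,
    integrable_withDensity_ofReal_iff (measurable_ptDensity ξ A₀) (ptDensity_nonneg hξ hA)]
  have hfun : (fun x => ptDensity ξ A₀ x * Real.log x)
      = Set.indicator (Set.Ioo 0 A₀)
          (fun x => ξ ^ 2 / A₀ ^ (ξ ^ 2) * (x ^ (ξ ^ 2 - 1) * Real.log x)) := by
    funext x
    rw [ptDensity]
    by_cases h : x ∈ Set.Ioo 0 A₀
    · rw [if_pos h, Set.indicator_of_mem h]; ring
    · rw [if_neg h, Set.indicator_of_notMem h, zero_mul]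
  rw [hfun, integrable_indicator_iff measurableSet_Ioo]
  have hp : (0:ℝ) < ξ ^ 2 := by positivity
  exact (((integrableOn_rpow_log_Ioc hp hA).mono_set Set.Ioo_subset_Ioc_self).const_mul _)

lemma integral_log_pointing {ξ A₀ : ℝ} (hξ : 0 < ξ) (hA : 0 < A₀) :
    ∫ x, Real.log x ∂(pointingErrorMeasure ξ A₀) = Real.log A₀ - 1 / ξ ^ 2 := by
  rw [pointingErrorMeasure_eq,
    integral_withDensity_ofReal (measurable_ptDensity ξ A₀) (ptDensity_nonneg hξ hA)]
  have hfun : (fun x => ptDensity ξ A₀ x * Real.log x)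
      = Set.indicator (Set.Ioo 0 A₀)
          (fun x => ξ ^ 2 / A₀ ^ (ξ ^ 2) * (x ^ (ξ ^ 2 - 1) * Real.log x)) := by
    funext x
    rw [ptDensity]
    by_cases h : x ∈ Set.Ioo 0 A₀
    · rw [if_pos h, Set.indicator_of_mem h]; ring
    · rw [if_neg h, Set.indicator_of_notMem h, zero_mul]
  have hp : (0:ℝ) < ξ ^ 2 := by positivity
  have hIoo_Ioc : ∫ x in Set.Ioo (0:ℝ) A₀, ξ ^ 2 / A₀ ^ (ξ ^ 2) * (x ^ (ξ ^ 2 - 1) * Real.log x)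
      = ∫ x in Set.Ioc (0:ℝ) A₀, ξ ^ 2 / A₀ ^ (ξ ^ 2) * (x ^ (ξ ^ 2 - 1) * Real.log x) :=
    (MeasureTheory.integral_Ioc_eq_integral_Ioo).symm
  rw [hfun, integral_indicator measurableSet_Ioo, hIoo_Ioc, integral_const_mul,
    integral_rpow_log_Ioc hp hA]
  have hApow : (0:ℝ) < A₀ ^ (ξ ^ 2) := Real.rpow_pos_of_pos hA _
  field_simp

lemma gammaMeasure_Iic_zero {a r : ℝ} : gammaMeasure a r (Set.Iic 0) = 0 := by
  rw [show gammaMeasure a r = volume.withDensity (gammaPDF a r) from rfl,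
    withDensity_apply _ measurableSet_Iic,
    setLIntegral_congr (Filter.EventuallyEq.symm Iio_ae_eq_Iic)]
  exact lintegral_gammaPDF_of_nonpos le_rfl

lemma pointing_Iic_zero {ξ A₀ : ℝ} : pointingErrorMeasure ξ A₀ (Set.Iic 0) = 0 := by
  rw [pointingErrorMeasure_eq, withDensity_apply _ measurableSet_Iic]
  have hz : ∀ᵐ x ∂volume, x ∈ Set.Iic (0:ℝ) →
      ENNReal.ofReal (ptDensity ξ A₀ x) = (fun _ => (0:ℝ≥0∞)) x := by
    filter_upwards with x hx
    have : x ∉ Set.Ioo 0 A₀ := fun h => absurd h.1 (not_lt.mpr hx)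
    rw [ptDensity, if_neg this, ENNReal.ofReal_zero]
  rw [setLIntegral_congr_fun_ae measurableSet_Iic hz, lintegral_zero]

/-- **High-SNR capacity of the Gamma–Gamma channel with pointing error.** Let `ν` be the
law of `I = X·Y·W` with `X ~ Gamma(a,a)`, `Y ~ Gamma(b,b)`, `W` pointing-error
distributed, all independent; let `μ(S)` be the water level of `ν` at `S` and
`C̄(S) = (1/k)·∫ max (log (λ/μ(S))) 0 dν` the waterfilling capacity (`k ∈ {1,2}`). Then
`C̄(S) - (1/k) log S → (1/k)·(log (A₀/(a·b)) + ψ(a) + ψ(b) - 1/ξ²)` as `S → ∞`. -/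
theorem capacity_highSNR_gammaGamma_pointing
    {Ω : Type*} [MeasurableSpace Ω] (P : Measure Ω) [IsProbabilityMeasure P]
    (a b ξ A₀ : ℝ) (ha : 0 < a) (hb : 0 < b) (hξ : 0 < ξ) (hA₀ : 0 < A₀) (hA₁ : A₀ ≤ 1)
    (k : ℝ) (hk : k = 1 ∨ k = 2)
    (X Y W : Ω → ℝ) (hX : Measurable X) (hY : Measurable Y) (hW : Measurable W)
    (hind : iIndepFun ![X, Y, W] P)
    (hXlaw : Measure.map X P = gammaMeasure a a)
    (hYlaw : Measure.map Y P = gammaMeasure b b)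
    (hWlaw : Measure.map W P = pointingErrorMeasure ξ A₀)
    (ν : Measure ℝ) (hνdef : ν = Measure.map (fun ω => X ω * Y ω * W ω) P)
    (μfun : ℝ → ℝ)
    (hμ : ∀ S : ℝ, 0 < S → 0 < μfun S ∧ ∫ l, max (1 / μfun S - 1 / l) 0 ∂ν = S) :
    Tendsto
      (fun S => (1 / k) * (∫ l, max (Real.log (l / μfun S)) 0 ∂ν) - (1 / k) * Real.log S)
      atTop
      (nhds ((1 / k) * (Real.log (A₀ / (a * b)) + digamma a + digamma b - 1 / ξ ^ 2))) := by
  have hXYW : Measurable fun ω => X ω * Y ω * W ω := (hX.mul hY).mul hW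
  have hνprob : IsProbabilityMeasure ν := by
    rw [hνdef]; exact Measure.isProbabilityMeasure_map hXYW.aemeasurable
  -- a.e. positivity
  have hXpos : ∀ᵐ ω ∂P, 0 < X ω := by
    rw [ae_iff]
    have : {ω | ¬ 0 < X ω} = X ⁻¹' Set.Iic 0 := by ext ω; simp [not_lt]
    rw [this, ← Measure.map_apply hX measurableSet_Iic, hXlaw, gammaMeasure_Iic_zero]
  have hYpos : ∀ᵐ ω ∂P, 0 < Y ω := by
    rw [ae_iff]
    have : {ω | ¬ 0 < Y ω} = Y ⁻¹' Set.Iic 0 := by ext ω; simp [not_lt]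
    rw [this, ← Measure.map_apply hY measurableSet_Iic, hYlaw, gammaMeasure_Iic_zero]
  have hWpos : ∀ᵐ ω ∂P, 0 < W ω := by
    rw [ae_iff]
    have : {ω | ¬ 0 < W ω} = W ⁻¹' Set.Iic 0 := by ext ω; simp [not_lt]
    rw [this, ← Measure.map_apply hW measurableSet_Iic, hWlaw, pointing_Iic_zero]
  have hνpos : ∀ᵐ l ∂ν, 0 < l := by
    have hms : MeasurableSet {x : ℝ | 0 < x} := measurableSet_Ioi
    rw [hνdef, ae_map_iff hXYW.aemeasurable hms]
    filter_upwards [hXpos, hYpos, hWpos] with ω h1 h2 h3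
    exact mul_pos (mul_pos h1 h2) h3
  -- integrability of log
  have hIntX : Integrable (fun ω => Real.log (X ω)) P := by
    have h := (integrable_map_measure Real.measurable_log.aestronglyMeasurable
      hX.aemeasurable (μ := P)).mp
    rw [hXlaw] at h
    exact h (integrable_log_gammaMeasure ha ha)
  have hIntY : Integrable (fun ω => Real.log (Y ω)) P := by
    have h := (integrable_map_measure Real.measurable_log.aestronglyMeasurable
      hY.aemeasurable (μ := P)).mp
    rw [hYlaw] at h
    exact h (integrable_log_gammaMeasure hb hb)
  have hIntW : Integrable (fun ω => Real.log (W ω)) P := by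
    have h := (integrable_map_measure Real.measurable_log.aestronglyMeasurable
      hW.aemeasurable (μ := P)).mp
    rw [hWlaw] at h
    exact h (integrable_log_pointing hξ hA₀)
  have hae : (fun ω => Real.log (X ω * Y ω * W ω))
      =ᵐ[P] fun ω => Real.log (X ω) + Real.log (Y ω) + Real.log (W ω) := by
    filter_upwards [hXpos, hYpos, hWpos] with ω h1 h2 h3
    rw [Real.log_mul (mul_pos h1 h2).ne' h3.ne', Real.log_mul h1.ne' h2.ne']
  have hIntXYW : Integrable (fun ω => Real.log (X ω * Y ω * W ω)) P :=
    (((hIntX.add hIntY).add hIntW).congr hae.symm)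
  have hIntLog : Integrable Real.log ν := by
    rw [hνdef, integrable_map_measure Real.measurable_log.aestronglyMeasurable
      hXYW.aemeasurable]
    exact hIntXYW
  -- value of ∫ log dν
  have hElog : ∫ l, Real.log l ∂ν
      = Real.log (A₀ / (a * b)) + digamma a + digamma b - 1 / ξ ^ 2 := by
    have h1 : ∫ l, Real.log l ∂ν = ∫ ω, Real.log (X ω * Y ω * W ω) ∂P := by
      rw [hνdef, integral_map hXYW.aemeasurable Real.measurable_log.aestronglyMeasurable]
    have h2 : ∫ ω, Real.log (X ω * Y ω * W ω) ∂P
        = (∫ ω, Real.log (X ω) ∂P) + (∫ ω, Real.log (Y ω) ∂P) + ∫ ω, Real.log (W ω) ∂P := by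
      rw [integral_congr_ae hae,
        integral_add (f := fun ω => Real.log (X ω) + Real.log (Y ω))
          (g := fun ω => Real.log (W ω)) (hIntX.add hIntY) hIntW,
        integral_add (f := fun ω => Real.log (X ω)) (g := fun ω => Real.log (Y ω)) hIntX hIntY]
    have hXint : ∫ ω, Real.log (X ω) ∂P = digamma a - Real.log a := by
      rw [← integral_log_gammaMeasure ha ha, ← hXlaw,
        integral_map hX.aemeasurable Real.measurable_log.aestronglyMeasurable]
    have hYint : ∫ ω, Real.log (Y ω) ∂P = digamma b - Real.log b := by
      rw [← integral_log_gammaMeasure hb hb, ← hYlaw,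
        integral_map hY.aemeasurable Real.measurable_log.aestronglyMeasurable]
    have hWint : ∫ ω, Real.log (W ω) ∂P = Real.log A₀ - 1 / ξ ^ 2 := by
      rw [← integral_log_pointing hξ hA₀, ← hWlaw,
        integral_map hW.aemeasurable Real.measurable_log.aestronglyMeasurable]
    rw [h1, h2, hXint, hYint, hWint,
      Real.log_div hA₀.ne' (mul_pos ha hb).ne', Real.log_mul ha.ne' hb.ne']
    ring
  -- main limit
  set L : ℝ := ∫ l, Real.log l ∂ν with hL
  suffices hMain : Tendsto
      (fun S => (∫ l, max (Real.log (l / μfun S)) 0 ∂ν) - Real.log S) atTop (nhds L) by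
    have h2 := hMain.const_mul (1 / k)
    rw [hElog] at h2
    exact h2.congr (fun S => by ring)
  -- water level facts
  set I3 : ℝ → ℝ := fun S => ∫ l, max (1 - μfun S / l) 0 ∂ν with hI3
  have hμS_eq : ∀ S : ℝ, 0 < S → μfun S * S = I3 S := by
    intro S hS
    obtain ⟨hμp, hEq⟩ := hμ S hS
    have hpt : I3 S = ∫ l, μfun S * ((1 / μfun S - 1 / l) ⊔ 0) ∂ν := by
      simp only [hI3]
      refine integral_congr_ae (Filter.Eventually.of_forall fun l => ?_)
      show (1 - μfun S / l) ⊔ 0 = μfun S * ((1 / μfun S - 1 / l) ⊔ 0)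
      rw [mul_max_of_nonneg _ _ hμp.le, mul_zero, mul_sub, mul_one_div, mul_one_div,
        div_self hμp.ne']
    rw [hpt, integral_const_mul, hEq]
  have hI3le1 : ∀ S : ℝ, 0 < S → I3 S ≤ 1 := by
    intro S hS
    obtain ⟨hμp, _⟩ := hμ S hS
    have h1 : I3 S ≤ ∫ _, (1:ℝ) ∂ν := by
      refine integral_mono_of_nonneg (Filter.Eventually.of_forall fun l => le_max_right _ _)
        (integrable_const 1) ?_
      filter_upwards [hνpos] with l hl
      exact max_le (by nlinarith [div_nonneg hμp.le hl.le]) zero_le_one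
    simpa using h1
  have hμle : ∀ᶠ S in atTop, μfun S ≤ S⁻¹ := by
    filter_upwards [eventually_gt_atTop (0:ℝ)] with S hS
    have h1 := hμS_eq S hS
    have h2 := hI3le1 S hS
    rw [← h1] at h2
    rw [← mul_le_mul_iff_of_pos_right hS, inv_mul_cancel₀ hS.ne']
    exact h2
  have hμpos : ∀ᶠ S in atTop, 0 < μfun S := by
    filter_upwards [eventually_gt_atTop (0:ℝ)] with S hS
    exact (hμ S hS).1
  have hμ0 : Tendsto μfun atTop (nhds 0) := by
    refine tendsto_of_tendsto_of_tendsto_of_le_of_le' tendsto_const_nhds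
      tendsto_inv_atTop_zero (hμpos.mono fun S h => h.le) hμle
  have hI3tendsto : Tendsto I3 atTop (nhds 1) := by
    have h := MeasureTheory.tendsto_integral_filter_of_dominated_convergence
      (μ := ν) (F := fun S l => max (1 - μfun S / l) 0) (f := fun _ => (1:ℝ))
      (bound := fun _ => (1:ℝ)) (l := atTop)
      (Filter.Eventually.of_forall fun S =>
        ((measurable_const.sub (measurable_const.div measurable_id)).max
          measurable_const).aestronglyMeasurable)
      (by
        filter_upwards [hμpos] with S hS
        filter_upwards [hνpos] with l hl
        rw [Real.norm_eq_abs, abs_of_nonneg (le_max_right _ _)]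
        exact max_le (by nlinarith [div_nonneg hS.le hl.le]) zero_le_one)
      (integrable_const 1)
      (by
        filter_upwards [hνpos] with l hl
        have h1 : Tendsto (fun S => 1 - μfun S / l) atTop (nhds 1) := by
          simpa using ((hμ0.div_const l).const_sub 1)
        have := h1.max (tendsto_const_nhds (x := (0:ℝ)))
        simpa using this)
    simpa using h
  have hlogI3 : Tendsto (fun S => Real.log (I3 S)) atTop (nhds 0) := by
    have := (Real.continuousAt_log one_ne_zero).tendsto.comp hI3tendsto
    simpa [Function.comp_def] using this
  -- dominated convergence pieces
  have hI1 : Tendsto (fun S => ∫ l, Set.indicator (Set.Ioi (μfun S)) Real.log l ∂ν)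
      atTop (nhds L) := by
    refine MeasureTheory.tendsto_integral_filter_of_dominated_convergence
      (bound := fun l => |Real.log l|)
      (Filter.Eventually.of_forall fun S =>
        (Real.measurable_log.indicator measurableSet_Ioi).aestronglyMeasurable)
      (Filter.Eventually.of_forall fun S => Filter.Eventually.of_forall fun l =>
        norm_indicator_le_norm_self _ _)
      hIntLog.abs ?_
    filter_upwards [hνpos] with l hl
    have hev : ∀ᶠ S in atTop, Set.indicator (Set.Ioi (μfun S)) Real.log l = Real.log l := by
      have hlt : ∀ᶠ S in atTop, S⁻¹ < l := tendsto_inv_atTop_zero.eventually_lt_const hl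
      filter_upwards [hμle, hlt] with S h1 h2
      exact Set.indicator_of_mem (Set.mem_Ioi.mpr (lt_of_le_of_lt h1 h2)) _
    exact Tendsto.congr' (hev.mono fun S h => h.symm) tendsto_const_nhds
  have hJ : Tendsto (fun S => ∫ l, Set.indicator (Set.Ioc 0 (μfun S)) (fun t => |Real.log t|) l ∂ν)
      atTop (nhds 0) := by
    have h := MeasureTheory.tendsto_integral_filter_of_dominated_convergence
      (μ := ν) (f := fun _ : ℝ => (0:ℝ)) (bound := fun l => |Real.log l|) (l := atTop)
      (F := fun S l => Set.indicator (Set.Ioc 0 (μfun S)) (fun t => |Real.log t|) l)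
      (Filter.Eventually.of_forall fun S =>
        (Real.measurable_log.abs.indicator measurableSet_Ioc).aestronglyMeasurable)
      (Filter.Eventually.of_forall fun S => Filter.Eventually.of_forall fun l => by
        simpa using norm_indicator_le_norm_self (fun t => |Real.log t|) l (s := Set.Ioc 0 (μfun S)))
      hIntLog.abs
      (by
        filter_upwards [hνpos] with l hl
        have hev : ∀ᶠ S in atTop,
            Set.indicator (Set.Ioc 0 (μfun S)) (fun t => |Real.log t|) l = 0 := by
          have hlt : ∀ᶠ S in atTop, S⁻¹ < l := tendsto_inv_atTop_zero.eventually_lt_const hl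
          filter_upwards [hμle, hlt] with S h1 h2
          exact Set.indicator_of_notMem
            (fun hmem => absurd hmem.2 (not_le.mpr (lt_of_le_of_lt h1 h2))) _
        exact Tendsto.congr' (hev.mono fun S h => h.symm) tendsto_const_nhds)
    simpa using h
  -- splitting identity
  have hsplit : ∀ᶠ S in atTop, (∫ l, max (Real.log (l / μfun S)) 0 ∂ν)
      = (∫ l, Set.indicator (Set.Ioi (μfun S)) Real.log l ∂ν)
        - Real.log (μfun S) * (ν (Set.Ioi (μfun S))).toReal := by
    filter_upwards [hμpos] with S hμp
    have h1 : Integrable (fun l => Set.indicator (Set.Ioi (μfun S)) Real.log l) ν :=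
      hIntLog.indicator measurableSet_Ioi
    have h2 : Integrable (fun l => Real.log (μfun S)
        * Set.indicator (Set.Ioi (μfun S)) (fun _ => (1:ℝ)) l) ν :=
      ((integrable_const (1:ℝ)).indicator measurableSet_Ioi).const_mul _
    have hcongr : (fun l => max (Real.log (l / μfun S)) 0)
        =ᵐ[ν] fun l => Set.indicator (Set.Ioi (μfun S)) Real.log l
          - Real.log (μfun S) * Set.indicator (Set.Ioi (μfun S)) (fun _ => (1:ℝ)) l := by
      filter_upwards [hνpos] with l hl
      by_cases hlμ : μfun S < l
      · rw [Set.indicator_of_mem (Set.mem_Ioi.mpr hlμ), Set.indicator_of_mem (Set.mem_Ioi.mpr hlμ),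
          Real.log_div hl.ne' hμp.ne', mul_one]
        exact max_eq_left (by linarith [Real.log_le_log hμp hlμ.le])
      · push_neg at hlμ
        rw [Set.indicator_of_notMem (by simpa using hlμ),
          Set.indicator_of_notMem (by simpa using hlμ), mul_zero, sub_zero]
        refine max_eq_right (Real.log_nonpos (by positivity) ((div_le_one hμp).mpr hlμ))
    rw [integral_congr_ae hcongr, integral_sub h1 h2, integral_const_mul]
    congr 2
    rw [integral_indicator_const (1:ℝ) measurableSet_Ioi, smul_eq_mul, mul_one, measureReal_def]
  -- middle term tends to zero
  have hmid : Tendsto (fun S => Real.log (μfun S) * ((ν (Set.Ioi (μfun S))).toReal - 1))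
      atTop (nhds 0) := by
    refine squeeze_zero_norm' ?_ hJ
    filter_upwards [hμpos, hμle, eventually_ge_atTop (1:ℝ)] with S hμp hle hS1
    have hμ1 : μfun S ≤ 1 := hle.trans (by
      rw [inv_le_one_iff₀]; right; exact hS1)
    -- (ν (Ioi μ)).toReal - 1 = -(ν (Ioc 0 μ)).toReal
    have hsum : (ν (Set.Ioi (μfun S))).toReal + (ν (Set.Iic (μfun S))).toReal = 1 := by
      have := measure_add_measure_compl (μ := ν) (measurableSet_Ioi (a := μfun S))
      rw [compl_Ioi, measure_univ] at this
      rw [← ENNReal.toReal_add (measure_ne_top ν _) (measure_ne_top ν _), this, ENNReal.toReal_one]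
    have hIic : ν (Set.Iic (μfun S)) = ν (Set.Ioc 0 (μfun S)) := by
      have hν0 : ν (Set.Iic 0) = 0 := by
        have := ae_iff.mp hνpos
        simpa [not_lt, Set.Iic] using this
      refine le_antisymm ?_ (measure_mono Set.Ioc_subset_Iic_self)
      calc ν (Set.Iic (μfun S)) = ν (Set.Iic 0 ∪ Set.Ioc 0 (μfun S)) := by
            rw [Set.Iic_union_Ioc_eq_Iic hμp.le]
        _ ≤ ν (Set.Iic 0) + ν (Set.Ioc 0 (μfun S)) := measure_union_le _ _
        _ = ν (Set.Ioc 0 (μfun S)) := by rw [hν0, zero_add]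
    have habs : |Real.log (μfun S) * ((ν (Set.Ioi (μfun S))).toReal - 1)|
        = |Real.log (μfun S)| * (ν (Set.Ioc 0 (μfun S))).toReal := by
      rw [abs_mul]
      congr 1
      rw [show (ν (Set.Ioi (μfun S))).toReal - 1 = -(ν (Set.Ioc 0 (μfun S))).toReal by
        rw [← hIic]; linarith, abs_neg, abs_of_nonneg ENNReal.toReal_nonneg]
    rw [Real.norm_eq_abs, habs,
      integral_indicator measurableSet_Ioc]
    have hconst : |Real.log (μfun S)| * (ν (Set.Ioc 0 (μfun S))).toReal
        = ∫ l in Set.Ioc 0 (μfun S), |Real.log (μfun S)| ∂ν := by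
      rw [setIntegral_const, smul_eq_mul, mul_comm, measureReal_def]
    rw [hconst]
    refine setIntegral_mono_on (integrableOn_const (measure_lt_top ν _).ne)
      (hIntLog.abs.integrableOn) measurableSet_Ioc (fun l hl => ?_)
    have hl0 : 0 < l := hl.1
    have hll : l ≤ μfun S := hl.2
    have h1 : Real.log l ≤ Real.log (μfun S) := Real.log_le_log hl0 hll
    have h2 : Real.log (μfun S) ≤ 0 := Real.log_nonpos hμp.le hμ1
    rw [abs_of_nonpos h2, abs_of_nonpos (h1.trans h2)]
    linarith
  -- log (μfun S * S) → 0
  have hlogμS : Tendsto (fun S => Real.log (μfun S * S)) atTop (nhds 0) := by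
    refine Tendsto.congr' ?_ hlogI3
    filter_upwards [eventually_gt_atTop (0:ℝ)] with S hS
    rw [hμS_eq S hS]
  -- combine
  have hcomb : ∀ᶠ S in atTop, (∫ l, max (Real.log (l / μfun S)) 0 ∂ν) - Real.log S
      = (∫ l, Set.indicator (Set.Ioi (μfun S)) Real.log l ∂ν)
        - Real.log (μfun S) * ((ν (Set.Ioi (μfun S))).toReal - 1)
        - Real.log (μfun S * S) := by
    filter_upwards [hsplit, hμpos, eventually_gt_atTop (0:ℝ)] with S h1 h2 h3
    rw [h1, Real.log_mul h2.ne' h3.ne']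
    ring
  have := ((hI1.sub hmid).sub hlogμS)
  rw [sub_zero, sub_zero] at this
  exact Tendsto.congr' (hcomb.mono fun S h => h.symm) this
end

section
/- Let a, b, ξ > 0, 0 < A₀ ≤ 1, and k ∈ {1, 2}. Let ν₀ be the law of Z = X·Y and ν₁ the law of I = X·Y·W, where X, Y, W are independent, X Gamma-distributed with shape a and rate a, Y Gamma-distributed with shape b and rate b, and W with the pointing-error density with parameters ξ and A₀. Let C̄₀(S) and C̄₁(S) denote the respective waterfilling capacities (with detection parameter k) at SNR S. Then lim_{S→∞} [ C̄₀(S) − C̄₁(S) ] = (1/k)·[ 1/ξ² − log A₀ ]; that is, at high SNR the capacity loss due to pointing error equals (1/k)(1/ξ² − log A₀). -/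
open MeasureTheory Real Filter ProbabilityTheory

namespace CapLossAux

open Set


lemma intervalIntegrable_rpow_mul_log {p b : ℝ} (hp : 0 < p) (hb0 : 0 < b) (hb1 : b ≤ 1) :
    IntervalIntegrable (fun x => x ^ (p - 1) * Real.log x) volume 0 b := by
  rw [intervalIntegrable_iff_integrableOn_Ioc_of_le hb0.le]
  have hbound : IntegrableOn (fun x : ℝ => (2 / p) * x ^ (p / 2 - 1)) (Ioc 0 b) volume := by
    have h := intervalIntegral.intervalIntegrable_rpow' (r := p / 2 - 1) (a := 0) (b := b)
      (by linarith)
    rw [intervalIntegrable_iff_integrableOn_Ioc_of_le hb0.le] at h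
    exact h.const_mul _
  refine hbound.integrable.mono ?_ ?_
  · exact (by measurability : Measurable fun x : ℝ => x ^ (p - 1) * Real.log x).aestronglyMeasurable
  · filter_upwards [ae_restrict_mem measurableSet_Ioc] with x hx
    have hx0 : 0 < x := hx.1
    have hx1 : x ≤ 1 := hx.2.trans hb1
    have h1 : |Real.log x * x ^ (p / 2)| < 1 / (p / 2) :=
      abs_log_mul_self_rpow_lt x (p / 2) hx0 hx1 (by linarith)
    have hsplit : x ^ (p - 1) * Real.log x = x ^ (p / 2 - 1) * (Real.log x * x ^ (p / 2)) := by
      rw [show p - 1 = (p / 2 - 1) + (p / 2) by ring, Real.rpow_add hx0]; ring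
    have hpos1 : (0:ℝ) ≤ x ^ (p / 2 - 1) := (Real.rpow_pos_of_pos hx0 _).le
    rw [Real.norm_eq_abs, Real.norm_eq_abs]
    calc |x ^ (p - 1) * Real.log x|
        = x ^ (p / 2 - 1) * |Real.log x * x ^ (p / 2)| := by
          rw [hsplit, abs_mul, abs_of_nonneg hpos1]
      _ ≤ x ^ (p / 2 - 1) * (2 / p) := by
          refine mul_le_mul_of_nonneg_left ?_ hpos1
          have h2 : 1 / (p / 2) = 2 / p := by field_simp
          linarith [h1]
      _ = |(2 / p) * x ^ (p / 2 - 1)| := by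
          rw [abs_of_nonneg (by positivity)]; ring

lemma integral_Ioo_rpow_mul_log {p b : ℝ} (hp : 0 < p) (hb0 : 0 < b) (hb1 : b ≤ 1) :
    ∫ x in Ioo 0 b, x ^ (p - 1) * Real.log x
      = (b ^ p * (p * Real.log b - 1)) / p ^ 2 := by
  set F : ℝ → ℝ := fun x => (x ^ p * (p * Real.log x - 1)) / p ^ 2 with hF
  have hderiv : ∀ x ∈ Ioo 0 b, HasDerivAt F (x ^ (p - 1) * Real.log x) x := by
    intro x hx
    have hx0 : 0 < x := hx.1
    have h1 : HasDerivAt (fun x : ℝ => x ^ p) (p * x ^ (p - 1)) x :=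
      Real.hasDerivAt_rpow_const (Or.inl hx0.ne')
    have h2 : HasDerivAt (fun x : ℝ => p * Real.log x - 1) (p / x) x := by
      simpa [div_eq_mul_inv] using ((Real.hasDerivAt_log hx0.ne').const_mul p).sub_const 1
    have h3 := (h1.mul h2).div_const (p ^ 2)
    refine h3.congr_deriv ?_
    have hxp : x ^ p = x ^ (p - 1) * x := by
      rw [show p = (p - 1) + 1 by ring, Real.rpow_add_one hx0.ne']; ring_nf
    rw [hxp]
    field_simp
    ring
  have hint := intervalIntegrable_rpow_mul_log hp hb0 hb1
  have h0 : Tendsto F (nhdsWithin 0 (Set.Ioi 0)) (nhds 0) := by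
    have hlog : Tendsto (fun x : ℝ => Real.log x * x ^ p) (nhdsWithin 0 (Set.Ioi 0)) (nhds 0) :=
      tendsto_log_mul_rpow_nhdsGT_zero hp
    have hrpow : Tendsto (fun x : ℝ => x ^ p) (nhdsWithin 0 (Set.Ioi 0)) (nhds 0) := by
      have h := (Real.continuousAt_rpow_const 0 p (Or.inr hp.le)).tendsto
      rw [Real.zero_rpow hp.ne'] at h
      exact h.mono_left nhdsWithin_le_nhds
    have h4 : Tendsto (fun x : ℝ => (Real.log x * x ^ p) * p - x ^ p)
        (nhdsWithin 0 (Set.Ioi 0)) (nhds (0 * p - 0)) := (hlog.mul_const p).sub hrpow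
    have h5 := h4.div_const (p ^ 2)
    simp only [zero_mul, sub_zero, zero_div] at h5
    refine h5.congr (fun x => ?_)
    simp only [hF]
    ring
  have hbt : Tendsto F (nhdsWithin b (Set.Iio b)) (nhds (F b)) := by
    have hc : ContinuousAt F b := by
      have h1 : ContinuousAt (fun x : ℝ => x ^ p) b :=
        Real.continuousAt_rpow_const b p (Or.inl hb0.ne')
      have h2 : ContinuousAt Real.log b := Real.continuousAt_log hb0.ne'
      exact (h1.mul ((h2.const_mul p).sub continuousAt_const)).div_const _
    exact hc.continuousWithinAt.tendsto
  have key := intervalIntegral.integral_eq_sub_of_hasDerivAt_of_tendsto hb0 hderiv hint h0 hbt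
  rw [intervalIntegral.integral_of_le hb0.le, integral_Ioc_eq_integral_Ioo] at key
  rw [key]
  simp [hF]



lemma pe_density_measurable (ξ A₀ : ℝ) :
    Measurable fun x : ℝ =>
      if x ∈ Set.Ioo 0 A₀ then ENNReal.ofReal (ξ ^ 2 / A₀ ^ (ξ ^ 2) * x ^ (ξ ^ 2 - 1)) else 0 := by
  refine Measurable.ite measurableSet_Ioo ?_ measurable_const
  exact (by measurability : Measurable fun x : ℝ =>
    ξ ^ 2 / A₀ ^ (ξ ^ 2) * x ^ (ξ ^ 2 - 1)).ennreal_ofReal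

lemma pe_ae_mem (ξ A₀ : ℝ) : ∀ᵐ x ∂(pointingErrorMeasure ξ A₀), x ∈ Set.Ioo 0 A₀ := by
  rw [ae_iff]
  unfold pointingErrorMeasure
  have hset : {a : ℝ | ¬ a ∈ Set.Ioo 0 A₀} = (Set.Ioo 0 A₀)ᶜ := rfl
  rw [hset, withDensity_apply _ (measurableSet_Ioo.compl)]
  rw [setLIntegral_congr_fun measurableSet_Ioo.compl
    (fun x (hx : x ∈ (Set.Ioo 0 A₀)ᶜ) => if_neg hx)]
  simp

lemma pe_eq_nnreal (ξ A₀ : ℝ) :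
    pointingErrorMeasure ξ A₀ = volume.withDensity
      (fun x => ((if x ∈ Set.Ioo 0 A₀
        then Real.toNNReal (ξ ^ 2 / A₀ ^ (ξ ^ 2) * x ^ (ξ ^ 2 - 1)) else 0 : NNReal) : ENNReal)) := by
  unfold pointingErrorMeasure
  congr 1
  funext x
  split_ifs with h
  · rfl
  · simp





variable {ξ A₀ : ℝ}

lemma pe_integrableOn (hξ : 0 < ξ) (hA₀ : 0 < A₀) (hA₁ : A₀ ≤ 1) :
    IntegrableOn (fun x : ℝ => Real.log x * (ξ ^ 2 / A₀ ^ (ξ ^ 2) * x ^ (ξ ^ 2 - 1)))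
      (Set.Ioo 0 A₀) volume := by
  have hp : (0:ℝ) < ξ ^ 2 := by positivity
  have h := (intervalIntegrable_rpow_mul_log hp hA₀ hA₁)
  rw [intervalIntegrable_iff_integrableOn_Ioc_of_le hA₀.le] at h
  have h2 := (h.mono_set Set.Ioo_subset_Ioc_self).const_mul (ξ ^ 2 / A₀ ^ (ξ ^ 2))
  exact h2.congr (ae_of_all _ fun x => by ring)

lemma pe_log_integrable (hξ : 0 < ξ) (hA₀ : 0 < A₀) (hA₁ : A₀ ≤ 1) :
    Integrable Real.log (pointingErrorMeasure ξ A₀) := by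
  unfold pointingErrorMeasure
  rw [integrable_withDensity_iff (pe_density_measurable ξ A₀)
    (ae_of_all _ (fun x => by split_ifs <;> simp [ENNReal.ofReal_lt_top]))]
  have heq : (fun x : ℝ => Real.log x *
      ((if x ∈ Set.Ioo 0 A₀ then ENNReal.ofReal (ξ ^ 2 / A₀ ^ (ξ ^ 2) * x ^ (ξ ^ 2 - 1)) else 0).toReal))
      = Set.indicator (Set.Ioo 0 A₀)
        (fun x => Real.log x * (ξ ^ 2 / A₀ ^ (ξ ^ 2) * x ^ (ξ ^ 2 - 1))) := by
    funext x
    by_cases h : x ∈ Set.Ioo 0 A₀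
    · rw [if_pos h, Set.indicator_of_mem h, ENNReal.toReal_ofReal]
      have hx0 : 0 < x := h.1
      positivity
    · rw [if_neg h, Set.indicator_of_notMem h]; simp
  rw [heq, integrable_indicator_iff measurableSet_Ioo]
  exact pe_integrableOn hξ hA₀ hA₁

lemma pe_integral_log (hξ : 0 < ξ) (hA₀ : 0 < A₀) (hA₁ : A₀ ≤ 1) :
    ∫ x, Real.log x ∂(pointingErrorMeasure ξ A₀) = Real.log A₀ - 1 / ξ ^ 2 := by
  have hp : (0:ℝ) < ξ ^ 2 := by positivity
  have hAp : (0:ℝ) < A₀ ^ (ξ ^ 2) := Real.rpow_pos_of_pos hA₀ _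
  have hfm : Measurable (fun x : ℝ => if x ∈ Set.Ioo 0 A₀
      then Real.toNNReal (ξ ^ 2 / A₀ ^ (ξ ^ 2) * x ^ (ξ ^ 2 - 1)) else 0) := by
    refine Measurable.ite measurableSet_Ioo ?_ measurable_const
    exact measurable_real_toNNReal.comp (by measurability)
  rw [pe_eq_nnreal, integral_withDensity_eq_integral_smul hfm Real.log]
  have heq : (fun x : ℝ => ((if x ∈ Set.Ioo 0 A₀
        then Real.toNNReal (ξ ^ 2 / A₀ ^ (ξ ^ 2) * x ^ (ξ ^ 2 - 1)) else 0 : NNReal)) • Real.log x)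
      = Set.indicator (Set.Ioo 0 A₀)
        (fun x => (ξ ^ 2 / A₀ ^ (ξ ^ 2)) * (x ^ (ξ ^ 2 - 1) * Real.log x)) := by
    funext x
    by_cases h : x ∈ Set.Ioo 0 A₀
    · rw [if_pos h, Set.indicator_of_mem h, NNReal.smul_def]
      have hx0 : 0 < x := h.1
      rw [Real.coe_toNNReal _ (by positivity), smul_eq_mul]
      ring
    · rw [if_neg h, Set.indicator_of_notMem h]; simp
  rw [heq, integral_indicator measurableSet_Ioo, MeasureTheory.integral_const_mul,
    integral_Ioo_rpow_mul_log hp hA₀ hA₁]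
  field_simp


lemma gamma_ae_pos {a r : ℝ} : ∀ᵐ x ∂(gammaMeasure a r), 0 < x := by
  rw [ae_iff]
  have hset : {x : ℝ | ¬ 0 < x} = Set.Iic 0 := by ext x; simp
  rw [hset]
  unfold gammaMeasure
  rw [withDensity_apply _ measurableSet_Iic]
  rw [lintegral_Iic_eq_lintegral_Iio_add_Icc _ le_rfl,
    ProbabilityTheory.lintegral_gammaPDF_of_nonpos le_rfl, zero_add]
  have : (volume.restrict (Set.Icc (0:ℝ) 0)) = 0 := by
    rw [Measure.restrict_eq_zero]
    simp
  rw [this, lintegral_zero_measure]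

lemma integrable_gammaPDFReal {a r : ℝ} (ha : 0 < a) (hr : 0 < r) :
    Integrable (gammaPDFReal a r) volume := by
  refine ⟨(ProbabilityTheory.measurable_gammaPDFReal a r).aestronglyMeasurable, ?_⟩
  rw [hasFiniteIntegral_iff_ofReal (ae_of_all _ (gammaPDFReal_nonneg ha hr))]
  have : ∫⁻ x, ENNReal.ofReal (gammaPDFReal a r x) = 1 := lintegral_gammaPDF_eq_one ha hr
  rw [this]
  exact ENNReal.one_lt_top

lemma gamma_integrable_id {a r : ℝ} (ha : 0 < a) (hr : 0 < r) :
    Integrable id (gammaMeasure a r) := by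
  unfold gammaMeasure
  have hm : Measurable (gammaPDF a r) :=
    (ProbabilityTheory.measurable_gammaPDFReal a r).ennreal_ofReal
  rw [integrable_withDensity_iff hm (ae_of_all _ (fun x => ENNReal.ofReal_lt_top))]
  have key : (fun x : ℝ => id x * (gammaPDF a r x).toReal)
      = fun x => (a / r) * gammaPDFReal (a + 1) r x := by
    funext x
    rw [gammaPDF, ENNReal.toReal_ofReal (gammaPDFReal_nonneg ha hr x)]
    unfold gammaPDFReal
    rcases lt_trichotomy x 0 with h | h | h
    · rw [if_neg (not_le.mpr h), if_neg (not_le.mpr h)]; simp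
    · subst h
      rw [if_pos le_rfl, if_pos le_rfl]
      rw [Real.zero_rpow (by linarith : a + 1 - 1 ≠ 0)]
      simp
    · rw [if_pos h.le, if_pos h.le]
      have hΓ : Real.Gamma (a + 1) = a * Real.Gamma a := Real.Gamma_add_one ha.ne'
      have hrp : r ^ (a + 1) = r ^ a * r := by
        rw [Real.rpow_add_one hr.ne' a]
      have hxp : x ^ (a + 1 - 1) = x ^ (a - 1) * x := by
        rw [show a + 1 - 1 = (a - 1) + 1 by ring, Real.rpow_add_one h.ne']
      rw [hΓ, hrp, hxp]
      have hΓ0 : Real.Gamma a ≠ 0 := (Real.Gamma_pos_of_pos ha).ne'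
      field_simp
      rfl
  rw [key]
  exact (integrable_gammaPDFReal (by linarith) hr).const_mul _



variable {ν : Measure ℝ} [IsProbabilityMeasure ν]

lemma water_le (hpos : ∀ᵐ l ∂ν, 0 < l) {μ S : ℝ} (hμ : 0 < μ) (hS : 0 < S)
    (h : ∫ l, max (1 / μ - 1 / l) 0 ∂ν = S) : μ ≤ 1 / S := by
  have hmeas : Measurable fun l : ℝ => max (1 / μ - 1 / l) 0 :=
    (measurable_const.sub (measurable_const.div measurable_id)).max measurable_const
  have hint : Integrable (fun l => max (1 / μ - 1 / l) 0) ν := by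
    refine Integrable.mono' (integrable_const (1 / μ)) hmeas.aestronglyMeasurable ?_
    filter_upwards [hpos] with l hl
    rw [Real.norm_eq_abs, abs_of_nonneg (le_max_right _ _)]
    exact max_le (sub_le_self _ (by positivity)) (by positivity)
  have hSle : S ≤ 1 / μ := by
    rw [← h]
    calc ∫ l, max (1 / μ - 1 / l) 0 ∂ν ≤ ∫ _, (1 / μ) ∂ν := by
          refine integral_mono_ae hint (integrable_const _) ?_
          filter_upwards [hpos] with l hl
          exact max_le (sub_le_self _ (by positivity)) (by positivity)
      _ = 1 / μ := by simp
  have h1 : S * μ ≤ 1 := by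
    have := mul_le_mul_of_nonneg_right hSle hμ.le
    rwa [one_div, inv_mul_cancel₀ hμ.ne'] at this
  rw [le_div_iff₀ hS]
  linarith [h1]

lemma water_tendsto (hpos : ∀ᵐ l ∂ν, 0 < l) (μfun : ℝ → ℝ)
    (hμ : ∀ S : ℝ, 0 < S → 0 < μfun S ∧ ∫ l, max (1 / μfun S - 1 / l) 0 ∂ν = S) :
    Tendsto (fun S => S * μfun S) atTop (nhds 1) := by
  have hle : ∀ᶠ S in atTop, 0 < μfun S ∧ μfun S ≤ 1 / S := by
    filter_upwards [eventually_gt_atTop 0] with S hS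
    exact ⟨(hμ S hS).1, water_le hpos (hμ S hS).1 hS (hμ S hS).2⟩
  have hμ0 : Tendsto μfun atTop (nhds 0) := by
    have hub : Tendsto (fun S : ℝ => 1 / S) atTop (nhds 0) := by
      simpa [one_div] using tendsto_inv_atTop_zero (𝕜 := ℝ)
    refine tendsto_of_tendsto_of_tendsto_of_le_of_le' tendsto_const_nhds hub ?_ ?_
    · filter_upwards [hle] with S h using h.1.le
    · filter_upwards [hle] with S h using h.2
  have hkey : (fun S => ∫ l, max (1 - μfun S / l) 0 ∂ν) =ᶠ[atTop] fun S => S * μfun S := by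
    filter_upwards [eventually_gt_atTop 0] with S hS
    obtain ⟨hm, hI⟩ := hμ S hS
    have heq : ∀ l : ℝ, μfun S * max (1 / μfun S - 1 / l) 0 = max (1 - μfun S / l) 0 := by
      intro l
      rw [mul_max_of_nonneg _ _ hm.le, mul_zero, mul_sub, mul_one_div, mul_one_div,
        div_self hm.ne']
    calc ∫ l, max (1 - μfun S / l) 0 ∂ν
        = ∫ l, μfun S * max (1 / μfun S - 1 / l) 0 ∂ν :=
          integral_congr_ae (ae_of_all _ fun l => (heq l).symm)
      _ = μfun S * S := by rw [integral_const_mul, hI]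
      _ = S * μfun S := mul_comm _ _
  have hDCT : Tendsto (fun S => ∫ l, max (1 - μfun S / l) 0 ∂ν) atTop (nhds 1) := by
    have h1 : nhds (1:ℝ) = nhds (∫ _l : ℝ, (1:ℝ) ∂ν) := by simp
    rw [h1]
    refine tendsto_integral_filter_of_dominated_convergence (fun _ => 1) ?_ ?_
      (integrable_const 1) ?_
    · refine Eventually.of_forall fun S => ?_
      exact ((measurable_const.sub (measurable_const.div measurable_id)).max
        measurable_const).aestronglyMeasurable
    · filter_upwards [eventually_gt_atTop 0] with S hS
      filter_upwards [hpos] with l hl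
      rw [Real.norm_eq_abs, abs_of_nonneg (le_max_right _ _)]
      exact max_le (by linarith [div_nonneg (hμ S hS).1.le hl.le]) zero_le_one
    · filter_upwards [hpos] with l hl
      have h2 : Tendsto (fun S => 1 - μfun S / l) atTop (nhds 1) := by
        have h3 : Tendsto (fun S => μfun S / l) atTop (nhds 0) := by
          simpa using hμ0.div_const l
        simpa using (tendsto_const_nhds (x := (1:ℝ)) (f := atTop)).sub h3
      have h3 := h2.max (tendsto_const_nhds (x := (0:ℝ)))
      rwa [max_eq_left zero_le_one] at h3
  exact Tendsto.congr' hkey hDCT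

lemma max_log_integrable (hpos : ∀ᵐ l ∂ν, 0 < l) (hid : Integrable id ν) (c : ℝ) :
    Integrable (fun l => max (Real.log l) c) ν := by
  refine Integrable.mono' (hid.abs.add (integrable_const |c|))
    (Real.measurable_log.max measurable_const).aestronglyMeasurable ?_
  filter_upwards [hpos] with l hl
  rw [Real.norm_eq_abs]
  have h1 : max (Real.log l) c ≤ |id l| + |c| := by
    refine max_le ?_ (le_trans (le_abs_self c) (by simp [abs_nonneg l]))
    have := Real.log_le_sub_one_of_pos hl
    have h2 := le_abs_self l
    have h3 := abs_nonneg c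
    simp only [id_eq]
    linarith
  have h2 : -(|id l| + |c|) ≤ max (Real.log l) c := by
    refine le_trans ?_ (le_max_right _ _)
    have := neg_abs_le c
    have h3 := abs_nonneg l
    simp only [id_eq]
    linarith
  exact abs_le.mpr ⟨h2, h1⟩

lemma T_rewrite (hpos : ∀ᵐ l ∂ν, 0 < l) {μ : ℝ} (hμ : 0 < μ)
    (hint : Integrable (fun l => max (Real.log l) (Real.log μ)) ν) :
    ∫ l, max (Real.log (l / μ)) 0 ∂ν
      = (∫ l, max (Real.log l) (Real.log μ) ∂ν) - Real.log μ := by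
  have heq : ∫ l, max (Real.log (l / μ)) 0 ∂ν
      = ∫ l, (max (Real.log l) (Real.log μ) - Real.log μ) ∂ν := by
    refine integral_congr_ae ?_
    filter_upwards [hpos] with l hl
    rw [Real.log_div hl.ne' hμ.ne']
    rcases le_total (Real.log l) (Real.log μ) with h | h
    · rw [max_eq_right (by linarith), max_eq_right h]; ring
    · rw [max_eq_left (by linarith), max_eq_left h]
  rw [heq, integral_sub hint (integrable_const _), integral_const]
  simp


end CapLossAux

/-- **High-SNR capacity loss due to pointing error.** Let `ν₀` be the law of `Z = X·Y`
and `ν₁` the law of `I = X·Y·W`, with `X ~ Gamma(a,a)`, `Y ~ Gamma(b,b)`, `W`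
pointing-error distributed, all independent. Let `μ₀(S)`, `μ₁(S)` be the respective
water levels and `C̄₀(S)`, `C̄₁(S)` the respective waterfilling capacities with detection
parameter `k ∈ {1,2}`. Then `C̄₀(S) - C̄₁(S) → (1/k)·(1/ξ² - log A₀)` as `S → ∞`. -/
theorem capacity_loss_pointing_highSNR
    {Ω : Type*} [MeasurableSpace Ω] (P : Measure Ω) [IsProbabilityMeasure P]
    (a b ξ A₀ : ℝ) (ha : 0 < a) (hb : 0 < b) (hξ : 0 < ξ) (hA₀ : 0 < A₀) (hA₁ : A₀ ≤ 1)
    (k : ℝ) (hk : k = 1 ∨ k = 2)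
    (X Y W : Ω → ℝ) (hX : Measurable X) (hY : Measurable Y) (hW : Measurable W)
    (hind : iIndepFun ![X, Y, W] P)
    (hXlaw : Measure.map X P = gammaMeasure a a)
    (hYlaw : Measure.map Y P = gammaMeasure b b)
    (hWlaw : Measure.map W P = pointingErrorMeasure ξ A₀)
    (ν₀ ν₁ : Measure ℝ)
    (hν₀ : ν₀ = Measure.map (fun ω => X ω * Y ω) P)
    (hν₁ : ν₁ = Measure.map (fun ω => X ω * Y ω * W ω) P)
    (μ₀fun μ₁fun : ℝ → ℝ)
    (hμ₀ : ∀ S : ℝ, 0 < S → 0 < μ₀fun S ∧ ∫ l, max (1 / μ₀fun S - 1 / l) 0 ∂ν₀ = S)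
    (hμ₁ : ∀ S : ℝ, 0 < S → 0 < μ₁fun S ∧ ∫ l, max (1 / μ₁fun S - 1 / l) 0 ∂ν₁ = S) :
    Tendsto
      (fun S => (1 / k) * (∫ l, max (Real.log (l / μ₀fun S)) 0 ∂ν₀)
        - (1 / k) * (∫ l, max (Real.log (l / μ₁fun S)) 0 ∂ν₁))
      atTop
      (nhds ((1 / k) * (1 / ξ ^ 2 - Real.log A₀))) := by
  have hp : (0:ℝ) < ξ ^ 2 := by positivity
  have hZ : Measurable fun ω => X ω * Y ω := hX.mul hY
  have hI : Measurable fun ω => X ω * Y ω * W ω := hZ.mul hW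
  -- almost-everywhere positivity
  have hXpos : ∀ᵐ ω ∂P, 0 < X ω := by
    have h : ∀ᵐ x ∂(Measure.map X P), 0 < x := by rw [hXlaw]; exact CapLossAux.gamma_ae_pos
    exact ae_of_ae_map hX.aemeasurable h
  have hYpos : ∀ᵐ ω ∂P, 0 < Y ω := by
    have h : ∀ᵐ x ∂(Measure.map Y P), 0 < x := by rw [hYlaw]; exact CapLossAux.gamma_ae_pos
    exact ae_of_ae_map hY.aemeasurable h
  have hWmem : ∀ᵐ ω ∂P, W ω ∈ Set.Ioo 0 A₀ := by
    have h : ∀ᵐ x ∂(Measure.map W P), x ∈ Set.Ioo 0 A₀ := by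
      rw [hWlaw]; exact CapLossAux.pe_ae_mem ξ A₀
    exact ae_of_ae_map hW.aemeasurable h
  have hZpos : ∀ᵐ ω ∂P, 0 < X ω * Y ω := by
    filter_upwards [hXpos, hYpos] with ω h1 h2; positivity
  have hIpos : ∀ᵐ ω ∂P, 0 < X ω * Y ω * W ω := by
    filter_upwards [hXpos, hYpos, hWmem] with ω h1 h2 h3
    have := h3.1; positivity
  -- integrability of the variables
  have hXint : Integrable X P := by
    have h : Integrable id (Measure.map X P) := hXlaw ▸ CapLossAux.gamma_integrable_id ha ha
    rwa [integrable_map_measure aestronglyMeasurable_id hX.aemeasurable] at h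
  have hYint : Integrable Y P := by
    have h : Integrable id (Measure.map Y P) := hYlaw ▸ CapLossAux.gamma_integrable_id hb hb
    rwa [integrable_map_measure aestronglyMeasurable_id hY.aemeasurable] at h
  have hindXY : IndepFun X Y P := by
    have h := hind.indepFun (i := 0) (j := 1) (by decide)
    simpa using h
  have hZint : Integrable (fun ω => X ω * Y ω) P := hindXY.integrable_mul hXint hYint
  have hIint : Integrable (fun ω => X ω * Y ω * W ω) P := by
    refine (hZint.abs).mono' hI.aestronglyMeasurable ?_
    filter_upwards [hWmem] with ω hw
    rw [Real.norm_eq_abs, abs_mul]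
    have h1 : |W ω| ≤ 1 := by rw [abs_of_pos hw.1]; linarith [hw.2]
    calc |X ω * Y ω| * |W ω| ≤ |X ω * Y ω| * 1 :=
          mul_le_mul_of_nonneg_left h1 (abs_nonneg _)
      _ = |X ω * Y ω| := mul_one _
  have hlogWint : Integrable (fun ω => Real.log (W ω)) P := by
    have h := CapLossAux.pe_log_integrable hξ hA₀ hA₁
    rw [← hWlaw, integrable_map_measure Real.measurable_log.aestronglyMeasurable
      hW.aemeasurable] at h
    exact h
  have hlogWval : ∫ ω, Real.log (W ω) ∂P = Real.log A₀ - 1 / ξ ^ 2 := by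
    have h := CapLossAux.pe_integral_log hξ hA₀ hA₁
    rw [← hWlaw, integral_map hW.aemeasurable Real.measurable_log.aestronglyMeasurable] at h
    exact h
  subst hν₀ hν₁
  haveI i₀ : IsProbabilityMeasure (Measure.map (fun ω => X ω * Y ω) P) :=
    Measure.isProbabilityMeasure_map hZ.aemeasurable
  haveI i₁ : IsProbabilityMeasure (Measure.map (fun ω => X ω * Y ω * W ω) P) :=
    Measure.isProbabilityMeasure_map hI.aemeasurable
  have hν₀pos : ∀ᵐ l ∂(Measure.map (fun ω => X ω * Y ω) P), 0 < l :=
    (MeasureTheory.ae_map_iff hZ.aemeasurable measurableSet_Ioi).mpr hZpos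
  have hν₁pos : ∀ᵐ l ∂(Measure.map (fun ω => X ω * Y ω * W ω) P), 0 < l :=
    (MeasureTheory.ae_map_iff hI.aemeasurable measurableSet_Ioi).mpr hIpos
  have hν₀id : Integrable id (Measure.map (fun ω => X ω * Y ω) P) :=
    (integrable_map_measure aestronglyMeasurable_id hZ.aemeasurable).mpr hZint
  have hν₁id : Integrable id (Measure.map (fun ω => X ω * Y ω * W ω) P) :=
    (integrable_map_measure aestronglyMeasurable_id hI.aemeasurable).mpr hIint
  -- water level asymptotics
  have h₀T := CapLossAux.water_tendsto hν₀pos μ₀fun hμ₀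
  have h₁T := CapLossAux.water_tendsto hν₁pos μ₁fun hμ₁
  set c₀ : ℝ → ℝ := fun S => Real.log (μ₀fun S) with hc₀def
  set c₁ : ℝ → ℝ := fun S => Real.log (μ₁fun S) with hc₁def
  have hcd : Tendsto (fun S => c₁ S - c₀ S) atTop (nhds 0) := by
    have hl₀ : Tendsto (fun S => Real.log (S * μ₀fun S)) atTop (nhds 0) := by
      have h := (Real.continuousAt_log one_ne_zero).tendsto.comp h₀T
      simpa [Function.comp_def] using h
    have hl₁ : Tendsto (fun S => Real.log (S * μ₁fun S)) atTop (nhds 0) := by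
      have h := (Real.continuousAt_log one_ne_zero).tendsto.comp h₁T
      simpa [Function.comp_def] using h
    have hsub : Tendsto (fun S => Real.log (S * μ₁fun S) - Real.log (S * μ₀fun S))
        atTop (nhds 0) := by simpa using hl₁.sub hl₀
    refine Tendsto.congr' ?_ hsub
    filter_upwards [eventually_gt_atTop 0] with S hS
    rw [Real.log_mul hS.ne' (hμ₁ S hS).1.ne', Real.log_mul hS.ne' (hμ₀ S hS).1.ne']
    simp only [hc₀def, hc₁def]
    ring
  have hc₀bot : Tendsto c₀ atTop atBot := by
    have hub : Tendsto (fun S : ℝ => -Real.log S) atTop atBot :=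
      tendsto_neg_atBot_iff.mpr Real.tendsto_log_atTop
    refine tendsto_atBot_mono' atTop ?_ hub
    filter_upwards [eventually_gt_atTop 0] with S hS
    have h1 := (hμ₀ S hS).1
    have h2 := CapLossAux.water_le hν₀pos h1 hS (hμ₀ S hS).2
    have h3 : Real.log (μ₀fun S) ≤ Real.log (1 / S) := Real.log_le_log h1 h2
    rwa [one_div, Real.log_inv] at h3
  have hc₁bot : Tendsto c₁ atTop atBot := by
    have hub : Tendsto (fun S : ℝ => -Real.log S) atTop atBot :=
      tendsto_neg_atBot_iff.mpr Real.tendsto_log_atTop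
    refine tendsto_atBot_mono' atTop ?_ hub
    filter_upwards [eventually_gt_atTop 0] with S hS
    have h1 := (hμ₁ S hS).1
    have h2 := CapLossAux.water_le hν₁pos h1 hS (hμ₁ S hS).2
    have h3 : Real.log (μ₁fun S) ≤ Real.log (1 / S) := Real.log_le_log h1 h2
    rwa [one_div, Real.log_inv] at h3
  have hcd1 : ∀ᶠ S in atTop, |c₀ S - c₁ S| ≤ 1 := by
    have h := Metric.tendsto_nhds.mp hcd 1 one_pos
    filter_upwards [h] with S hS
    rw [Real.dist_eq, sub_zero] at hS
    rw [abs_sub_comm]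
    linarith [hS.le]
  set L : ℝ := 1 / ξ ^ 2 - Real.log A₀ with hLdef
  -- dominated convergence for the main difference
  have hD : Tendsto (fun S => ∫ ω, (max (Real.log (X ω * Y ω)) (c₀ S)
      - max (Real.log (X ω * Y ω * W ω)) (c₁ S)) ∂P) atTop (nhds L) := by
    have hlimval : L = ∫ ω, -Real.log (W ω) ∂P := by
      rw [integral_neg, hlogWval, hLdef]; ring
    rw [hlimval]
    refine tendsto_integral_filter_of_dominated_convergence
      (fun ω => |Real.log (W ω)| + 1) ?_ ?_ (hlogWint.abs.add (integrable_const 1)) ?_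
    · refine Eventually.of_forall fun S => ?_
      exact (((Real.measurable_log.comp hZ).max measurable_const).sub
        ((Real.measurable_log.comp hI).max measurable_const)).aestronglyMeasurable
    · filter_upwards [hcd1] with S hS1
      filter_upwards [hXpos, hYpos, hWmem] with ω h1 h2 h3
      have hz : 0 < X ω * Y ω := by positivity
      have hlog : Real.log (X ω * Y ω * W ω)
          = Real.log (X ω * Y ω) + Real.log (W ω) := Real.log_mul hz.ne' h3.1.ne'
      rw [Real.norm_eq_abs, hlog]
      refine le_trans (abs_max_sub_max_le_max _ _ _ _) ?_
      have h4 : |Real.log (X ω * Y ω) - (Real.log (X ω * Y ω) + Real.log (W ω))|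
          = |Real.log (W ω)| := by
        rw [show Real.log (X ω * Y ω) - (Real.log (X ω * Y ω) + Real.log (W ω))
          = -Real.log (W ω) by ring, abs_neg]
      rw [h4]
      exact max_le (by linarith) (by linarith [abs_nonneg (Real.log (W ω))])
    · filter_upwards [hXpos, hYpos, hWmem] with ω h1 h2 h3
      have hz : 0 < X ω * Y ω := by positivity
      have hA : Tendsto (fun S => max (Real.log (X ω * Y ω)) (c₀ S)) atTop
          (nhds (Real.log (X ω * Y ω))) := by
        refine Tendsto.congr' ?_ tendsto_const_nhds
        filter_upwards [hc₀bot.eventually (eventually_le_atBot (Real.log (X ω * Y ω)))]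
          with S hS
        exact (max_eq_left hS).symm
      have hB : Tendsto (fun S => max (Real.log (X ω * Y ω * W ω)) (c₁ S)) atTop
          (nhds (Real.log (X ω * Y ω * W ω))) := by
        refine Tendsto.congr' ?_ tendsto_const_nhds
        filter_upwards [hc₁bot.eventually (eventually_le_atBot (Real.log (X ω * Y ω * W ω)))]
          with S hS
        exact (max_eq_left hS).symm
      have heq : Real.log (X ω * Y ω) - Real.log (X ω * Y ω * W ω) = -Real.log (W ω) := by
        rw [Real.log_mul hz.ne' h3.1.ne']; ring
      rw [← heq]
      exact hA.sub hB
  -- rewrite the capacity difference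
  have hT : (fun S => (∫ l, max (Real.log (l / μ₀fun S)) 0
        ∂(Measure.map (fun ω => X ω * Y ω) P))
      - (∫ l, max (Real.log (l / μ₁fun S)) 0 ∂(Measure.map (fun ω => X ω * Y ω * W ω) P)))
      =ᶠ[atTop] (fun S => (∫ ω, (max (Real.log (X ω * Y ω)) (c₀ S)
        - max (Real.log (X ω * Y ω * W ω)) (c₁ S)) ∂P) + (c₁ S - c₀ S)) := by
    filter_upwards [eventually_gt_atTop 0] with S hS
    have h₀m := (hμ₀ S hS).1
    have h₁m := (hμ₁ S hS).1
    have e₀ := CapLossAux.T_rewrite hν₀pos h₀m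
      (CapLossAux.max_log_integrable hν₀pos hν₀id (Real.log (μ₀fun S)))
    have e₁ := CapLossAux.T_rewrite hν₁pos h₁m
      (CapLossAux.max_log_integrable hν₁pos hν₁id (Real.log (μ₁fun S)))
    have m₀ : ∫ l, max (Real.log l) (c₀ S) ∂(Measure.map (fun ω => X ω * Y ω) P)
        = ∫ ω, max (Real.log (X ω * Y ω)) (c₀ S) ∂P :=
      integral_map hZ.aemeasurable
        (Real.measurable_log.max measurable_const).aestronglyMeasurable
    have m₁ : ∫ l, max (Real.log l) (c₁ S) ∂(Measure.map (fun ω => X ω * Y ω * W ω) P)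
        = ∫ ω, max (Real.log (X ω * Y ω * W ω)) (c₁ S) ∂P :=
      integral_map hI.aemeasurable
        (Real.measurable_log.max measurable_const).aestronglyMeasurable
    have hi₀ : Integrable (fun ω => max (Real.log (X ω * Y ω)) (c₀ S)) P := by
      have h := CapLossAux.max_log_integrable hν₀pos hν₀id (c₀ S)
      rwa [integrable_map_measure
        (Real.measurable_log.max measurable_const).aestronglyMeasurable hZ.aemeasurable] at h
    have hi₁ : Integrable (fun ω => max (Real.log (X ω * Y ω * W ω)) (c₁ S)) P := by
      have h := CapLossAux.max_log_integrable hν₁pos hν₁id (c₁ S)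
      rwa [integrable_map_measure
        (Real.measurable_log.max measurable_const).aestronglyMeasurable hI.aemeasurable] at h
    rw [e₀, e₁, m₀, m₁, integral_sub hi₀ hi₁]
    ring
  have hfinal : Tendsto (fun S => (∫ l, max (Real.log (l / μ₀fun S)) 0
        ∂(Measure.map (fun ω => X ω * Y ω) P))
      - (∫ l, max (Real.log (l / μ₁fun S)) 0 ∂(Measure.map (fun ω => X ω * Y ω * W ω) P)))
      atTop (nhds L) := by
    have h := hD.add hcd
    rw [add_zero] at h
    exact Tendsto.congr' hT.symm h
  have hgoal := hfinal.const_mul (1 / k)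
  refine Tendsto.congr (fun S => by ring) hgoal
end

section
/- Let σ > 0, w > 0, and 0 < A₀ ≤ 1, and set ξ = w/(2σ). Let X and Y be independent real Gaussian random variables, each with mean 0 and variance σ². Then for every c with 0 < c ≤ A₀, the random variable I_p = A₀·exp(−2(X² + Y²)/w²) satisfies ℙ[I_p ≤ c] = (c/A₀)^{ξ²}; in particular, I_p has the pointing-error density f(x) = (ξ²/A₀^{ξ²})·x^{ξ²−1} on (0, A₀). -/
open MeasureTheory Real Filter ProbabilityTheory

open scoped NNReal ENNReal

section PointingErrorAux
open Set

lemma radial_integral {b : ℝ} (hb : 0 < b) (a : ℝ) :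
    ∫ r in Set.Ioi a, r * Real.exp (-b * r ^ 2) = Real.exp (-b * a ^ 2) / (2 * b) := by
  have hint : IntegrableOn (fun r : ℝ => r * Real.exp (-b * r ^ 2)) (Set.Ioi a) := by
    have := integrable_rpow_mul_exp_neg_mul_sq hb (by norm_num : (-1:ℝ) < 1)
    simp only [Real.rpow_one] at this
    exact this.integrableOn
  have hderiv : ∀ x ∈ Set.Ioi a, HasDerivAt (fun r : ℝ => -Real.exp (-b * r ^ 2) / (2 * b))
      (x * Real.exp (-b * x ^ 2)) x := by
    intro x _
    have h1 : HasDerivAt (fun r : ℝ => -b * r ^ 2) (-b * (2 * x ^ 1)) x :=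
      (hasDerivAt_pow 2 x).const_mul (-b)
    have h2 := (h1.exp.neg).div_const (2 * b)
    refine h2.congr_deriv ?_
    have hb0 : b ≠ 0 := hb.ne'
    field_simp
  have hlim : Tendsto (fun r : ℝ => -Real.exp (-b * r ^ 2) / (2 * b)) atTop (nhds 0) := by
    have h1 : Tendsto (fun r : ℝ => -b * r ^ 2) atTop atBot := by
      apply Tendsto.const_mul_atTop_of_neg (neg_neg_iff_pos.mpr hb)
      exact tendsto_pow_atTop (by norm_num)
    have := (Real.tendsto_exp_atBot.comp h1).neg.div_const (2 * b)
    simpa using this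
  have hcont : ContinuousWithinAt (fun r : ℝ => -Real.exp (-b * r ^ 2) / (2 * b)) (Set.Ici a) a :=
    (Continuous.continuousWithinAt (by continuity))
  have key := integral_Ioi_of_hasDerivAt_of_tendsto hcont hderiv hint hlim
  rw [key]
  field_simp
  ring

lemma gauss2_tail {v : ℝ≥0} (hv : v ≠ 0) {t : ℝ} (ht : 0 ≤ t) :
    ((gaussianReal 0 v).prod (gaussianReal 0 v)) {p : ℝ × ℝ | t ≤ p.1 ^ 2 + p.2 ^ 2}
      = ENNReal.ofReal (Real.exp (-t / (2 * v))) := by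
  have hv0 : 0 < (v : ℝ) := by
    have := hv
    positivity
  set c : ℝ := (Real.sqrt (2 * π * v))⁻¹ with hc
  have hcpos : 0 < c := by
    rw [hc]
    apply inv_pos.mpr
    apply Real.sqrt_pos.mpr
    positivity
  set S : Set (ℝ × ℝ) := {p : ℝ × ℝ | t ≤ p.1 ^ 2 + p.2 ^ 2} with hS
  have hSmeas : MeasurableSet S := by
    apply measurableSet_le measurable_const
    exact (measurable_fst.pow_const 2).add (measurable_snd.pow_const 2)
  -- step 1 : product measure as withDensity
  have h1 : (gaussianReal 0 v).prod (gaussianReal 0 v)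
      = (volume.prod volume).withDensity (fun z => gaussianPDF 0 v z.1 * gaussianPDF 0 v z.2) := by
    refine Measure.prod_eq fun s u hs hu => ?_
    rw [withDensity_apply _ (hs.prod hu), ← Measure.prod_restrict,
      lintegral_prod_mul (measurable_gaussianPDF 0 v).aemeasurable
        (measurable_gaussianPDF 0 v).aemeasurable,
      gaussianReal_apply _ hv, gaussianReal_apply _ hv]
  rw [h1, withDensity_apply _ hSmeas]
  -- step 2 : to Bochner integral
  have hInt : Integrable (fun z : ℝ × ℝ => gaussianPDFReal 0 v z.1 * gaussianPDFReal 0 v z.2)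
      (volume.prod volume) :=
    (integrable_gaussianPDFReal 0 v).mul_prod (integrable_gaussianPDFReal 0 v)
  have h2 : ∫⁻ z in S, gaussianPDF 0 v z.1 * gaussianPDF 0 v z.2 ∂(volume.prod volume)
      = ENNReal.ofReal (∫ z in S, gaussianPDFReal 0 v z.1 * gaussianPDFReal 0 v z.2
          ∂(volume.prod volume)) := by
    rw [ofReal_integral_eq_lintegral_ofReal hInt.restrict
      (ae_of_all _ fun z => mul_nonneg (gaussianPDFReal_nonneg _ _ _) (gaussianPDFReal_nonneg _ _ _))]
    congr 1 with z
    rw [gaussianPDF, gaussianPDF, ENNReal.ofReal_mul (gaussianPDFReal_nonneg _ _ _)]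
  rw [h2]
  congr 1
  -- step 3 : polar coordinates
  have h3 : ∫ z in S, gaussianPDFReal 0 v z.1 * gaussianPDFReal 0 v z.2 ∂(volume.prod volume)
      = ∫ z, S.indicator (fun z : ℝ × ℝ =>
          gaussianPDFReal 0 v z.1 * gaussianPDFReal 0 v z.2) z := by
    rw [← Measure.volume_eq_prod, integral_indicator hSmeas]
  rw [h3, ← integral_comp_polarCoord_symm]
  -- evaluate the integrand on polar coordinates
  have h4 : ∀ p : ℝ × ℝ, p.1 • (S.indicator (fun z : ℝ × ℝ =>
        gaussianPDFReal 0 v z.1 * gaussianPDFReal 0 v z.2) (polarCoord.symm p))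
      = (p.1 * ({r : ℝ | t ≤ r ^ 2}.indicator (fun r => c ^ 2 * Real.exp (-r ^ 2 / (2 * v))) p.1))
          * (1 : ℝ) := by
    intro p
    have hsq : (p.1 * Real.cos p.2) ^ 2 + (p.1 * Real.sin p.2) ^ 2 = p.1 ^ 2 := by
      nlinarith [Real.sin_sq_add_cos_sq p.2]
    have hexp : Real.exp (-(p.1 * Real.cos p.2) ^ 2 / (2 * v))
        * Real.exp (-(p.1 * Real.sin p.2) ^ 2 / (2 * v)) = Real.exp (-p.1 ^ 2 / (2 * v)) := by
      rw [← Real.exp_add]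
      congr 1
      rw [← add_div]
      rw [show -(p.1 * Real.cos p.2) ^ 2 + -(p.1 * Real.sin p.2) ^ 2 = -p.1 ^ 2 by linarith]
    simp only [polarCoord_symm_apply, smul_eq_mul, mul_one]
    by_cases hmem : t ≤ p.1 ^ 2
    · rw [Set.indicator_of_mem (by simpa [S, hsq] using hmem : (p.1 * Real.cos p.2, p.1 * Real.sin p.2) ∈ S),
        Set.indicator_of_mem (by simpa using hmem)]
      simp only [gaussianPDFReal, sub_zero]
      rw [show ∀ a b : ℝ, c * rexp (a) * (c * rexp b) = c ^ 2 * (rexp a * rexp b) from fun a b => by ring,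
        hexp]
    · rw [Set.indicator_of_notMem (by simpa [S, hsq] using hmem : (p.1 * Real.cos p.2, p.1 * Real.sin p.2) ∉ S),
        Set.indicator_of_notMem (by simpa using hmem)]
  rw [setIntegral_congr_fun (polarCoord.open_target.measurableSet) (fun p _ => h4 p)]
  rw [polarCoord_target, Measure.volume_eq_prod]
  refine (setIntegral_prod_mul (fun r : ℝ => r * ({r : ℝ | t ≤ r ^ 2}.indicator
      (fun r => c ^ 2 * Real.exp (-r ^ 2 / (2 * v))) r)) (fun _ : ℝ => (1 : ℝ))
      (Ioi 0) (Ioo (-π) π)).trans ?_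
  -- angular integral
  have hang : ∫ (θ : ℝ) in Ioo (-π) π, (fun _ : ℝ => (1:ℝ)) θ = 2 * π := by
    simp [Real.volume_Ioo]
    rw [max_eq_left (by positivity)]
    ring
  rw [hang]
  -- radial integral
  set A : Set ℝ := {r : ℝ | t ≤ r ^ 2} with hA
  have hAmeas : MeasurableSet A :=
    measurableSet_le measurable_const (measurable_id.pow_const 2)
  have hind : ∀ r : ℝ, r * (A.indicator
        (fun r => c ^ 2 * Real.exp (-r ^ 2 / (2 * v))) r)
      = A.indicator (fun r => r * (c ^ 2 * Real.exp (-r ^ 2 / (2 * v)))) r := by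
    intro r
    by_cases h : t ≤ r ^ 2 <;> simp [hA, Set.indicator_apply, mem_setOf_eq, h]
  rw [integral_congr_ae (ae_of_all _ hind), setIntegral_indicator hAmeas]
  have hsetae : ((Ioi (0:ℝ) ∩ A : Set ℝ) : Set ℝ) =ᵐ[volume] (Ioi (Real.sqrt t) : Set ℝ) := by
    have h1 : (Ioi (0:ℝ) ∩ A) \ Ioi (Real.sqrt t) ⊆ {Real.sqrt t} := by
      intro r hr
      obtain ⟨⟨hr0, hrt⟩, hr2⟩ := hr
      simp only [mem_Ioi, not_lt] at hr2
      have : Real.sqrt t ≤ r := by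
        rw [← Real.sqrt_sq (le_of_lt hr0)]
        exact Real.sqrt_le_sqrt hrt
      simp [le_antisymm hr2 this]
    have h2 : Ioi (Real.sqrt t) \ (Ioi (0:ℝ) ∩ A) = ∅ := by
      ext r
      simp only [mem_diff, mem_Ioi, mem_inter_iff, mem_setOf_eq, mem_empty_iff_false, iff_false]
      rintro ⟨hr, hnot⟩
      apply hnot
      have h0 : 0 < r := lt_of_le_of_lt (Real.sqrt_nonneg t) hr
      refine ⟨h0, ?_⟩
      calc t = Real.sqrt t ^ 2 := (Real.sq_sqrt ht).symm
        _ ≤ r ^ 2 := by nlinarith [Real.sqrt_nonneg t]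
    exact MeasureTheory.ae_eq_set.mpr ⟨measure_mono_null h1 (measure_singleton _),
      by rw [h2]; simp⟩
  rw [setIntegral_congr_set hsetae]
  have hb : (0:ℝ) < (2 * (v:ℝ))⁻¹ := by positivity
  have hrad : ∫ r in Ioi (Real.sqrt t), r * (c ^ 2 * Real.exp (-r ^ 2 / (2 * v)))
      = c ^ 2 * (Real.exp (-t / (2 * v)) * v) := by
    have hre : ∀ r : ℝ, r * (c ^ 2 * Real.exp (-r ^ 2 / (2 * v)))
        = c ^ 2 * (r * Real.exp (-(2 * (v:ℝ))⁻¹ * r ^ 2)) := by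
      intro r
      rw [show -(r:ℝ) ^ 2 / (2 * v) = -(2 * (v:ℝ))⁻¹ * r ^ 2 by field_simp]
      ring
    rw [integral_congr_ae (ae_of_all _ hre), integral_const_mul,
      radial_integral hb (Real.sqrt t)]
    rw [Real.sq_sqrt ht]
    congr 1
    rw [show -(2 * (v:ℝ))⁻¹ * t = -t / (2 * v) by field_simp]
    field_simp
  rw [hrad]
  have hc2 : c ^ 2 = (2 * π * v)⁻¹ := by
    rw [hc, ← Real.sqrt_inv, Real.sq_sqrt (by positivity)]
  rw [hc2]
  field_simp

lemma pointing_Iic {ξ A₀ a : ℝ} (hξ : 0 < ξ) (hA : 0 < A₀) (ha : 0 < a) :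
    pointingErrorMeasure ξ A₀ (Set.Iic a)
      = ENNReal.ofReal ((min a A₀ / A₀) ^ (ξ ^ 2)) := by
  set m := min a A₀ with hm
  have hm0 : 0 < m := lt_min ha hA
  have hmA : m ≤ A₀ := min_le_right _ _
  have hp1 : (-1:ℝ) < ξ ^ 2 - 1 := by nlinarith
  have hArp : (0:ℝ) < A₀ ^ (ξ ^ 2) := Real.rpow_pos_of_pos hA _
  have hk0 : 0 ≤ ξ ^ 2 / A₀ ^ (ξ ^ 2) := by positivity
  rw [pointingErrorMeasure, withDensity_apply _ measurableSet_Iic]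
  have hfun : (fun x : ℝ => if x ∈ Set.Ioo 0 A₀ then
        ENNReal.ofReal (ξ ^ 2 / A₀ ^ (ξ ^ 2) * x ^ (ξ ^ 2 - 1)) else 0)
      = (Set.Ioo 0 A₀).indicator
          (fun x => ENNReal.ofReal (ξ ^ 2 / A₀ ^ (ξ ^ 2) * x ^ (ξ ^ 2 - 1))) := by
    ext x; rw [Set.indicator_apply]
  rw [hfun, lintegral_indicator measurableSet_Ioo, Measure.restrict_restrict measurableSet_Ioo]
  have hsetae : ((Set.Ioo 0 A₀ ∩ Set.Iic a : Set ℝ) : Set ℝ) =ᵐ[volume] (Set.Ioo 0 m : Set ℝ) := by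
    apply MeasureTheory.ae_eq_set.mpr
    constructor
    · refine measure_mono_null (fun x hx => ?_) (measure_singleton a)
      obtain ⟨⟨⟨h0x, hxA⟩, hxa⟩, hnot⟩ := hx
      simp only [Set.mem_Ioo, not_and, not_lt] at hnot
      have hmx : m ≤ x := hnot h0x
      rcases le_total a A₀ with hca | hca
      · have : x = a := le_antisymm hxa ((min_eq_left hca) ▸ hmx)
        simp [this]
      · exact absurd hxA (not_lt.mpr ((min_eq_right hca) ▸ hmx))
    · have hsub : Set.Ioo 0 m \ (Set.Ioo 0 A₀ ∩ Set.Iic a : Set ℝ) = ∅ := by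
        ext x
        simp only [Set.mem_diff, Set.mem_Ioo, Set.mem_inter_iff, Set.mem_Iic,
          Set.mem_empty_iff_false, iff_false]
        rintro ⟨⟨h0x, hxm⟩, hnot⟩
        exact hnot ⟨⟨h0x, lt_of_lt_of_le hxm hmA⟩, le_of_lt (lt_of_lt_of_le hxm (min_le_left _ _))⟩
      rw [hsub]
      simp
  rw [Measure.restrict_congr_set hsetae]
  have hintrv : IntervalIntegrable (fun x : ℝ => x ^ (ξ ^ 2 - 1)) volume 0 m :=
    intervalIntegral.intervalIntegrable_rpow' hp1
  have hint : IntegrableOn (fun x : ℝ => ξ ^ 2 / A₀ ^ (ξ ^ 2) * x ^ (ξ ^ 2 - 1)) (Set.Ioo 0 m) := by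
    apply Integrable.const_mul
    rw [intervalIntegrable_iff_integrableOn_Ioo_of_le hm0.le] at hintrv
    exact hintrv
  rw [← ofReal_integral_eq_lintegral_ofReal hint ?_]
  swap
  · filter_upwards [ae_restrict_mem measurableSet_Ioo] with x hx
    exact mul_nonneg hk0 (Real.rpow_nonneg hx.1.le _)
  congr 1
  rw [MeasureTheory.integral_const_mul, ← integral_Ioc_eq_integral_Ioo,
    ← intervalIntegral.integral_of_le hm0.le, integral_rpow (Or.inl hp1)]
  rw [show (ξ ^ 2 - 1 + 1) = ξ ^ 2 by ring, Real.zero_rpow (by positivity : (ξ:ℝ) ^ 2 ≠ 0),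
    Real.div_rpow hm0.le hA.le]
  have hmrp : (0:ℝ) < m ^ (ξ ^ 2) := Real.rpow_pos_of_pos hm0 _
  field_simp
  ring

end PointingErrorAux

/-- **Derivation of the zero-boresight pointing-error distribution.** Let `σ, w > 0`,
`0 < A₀ ≤ 1`, `ξ = w/(2σ)`, and let `X, Y` be independent centered Gaussians of variance
`σ²`. Then `I_p = A₀·exp(-2(X²+Y²)/w²)` satisfies `ℙ[I_p ≤ c] = (c/A₀)^{ξ²}` for all
`0 < c ≤ A₀`; in particular `I_p` has the pointing-error law with parameters `ξ, A₀`. -/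
theorem pointingError_distribution
    {Ω : Type*} [MeasurableSpace Ω] (P : Measure Ω) [IsProbabilityMeasure P]
    (σ w A₀ : ℝ) (hσ : 0 < σ) (hw : 0 < w) (hA₀ : 0 < A₀) (hA₁ : A₀ ≤ 1)
    (X Y : Ω → ℝ) (hX : Measurable X) (hY : Measurable Y)
    (hind : IndepFun X Y P)
    (hXlaw : Measure.map X P = gaussianReal 0 (Real.toNNReal (σ ^ 2)))
    (hYlaw : Measure.map Y P = gaussianReal 0 (Real.toNNReal (σ ^ 2))) :
    (∀ c : ℝ, 0 < c → c ≤ A₀ →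
      P {ω | A₀ * Real.exp (-2 * (X ω ^ 2 + Y ω ^ 2) / w ^ 2) ≤ c}
        = ENNReal.ofReal ((c / A₀) ^ ((w / (2 * σ)) ^ 2))) ∧
    Measure.map (fun ω => A₀ * Real.exp (-2 * (X ω ^ 2 + Y ω ^ 2) / w ^ 2)) P
      = pointingErrorMeasure (w / (2 * σ)) A₀ := by
  have hξ : 0 < w / (2 * σ) := by positivity
  have hv : Real.toNNReal (σ ^ 2) ≠ 0 := by
    simp only [ne_eq, Real.toNNReal_eq_zero, not_le]
    positivity
  have hvr : ((Real.toNNReal (σ ^ 2) : ℝ≥0) : ℝ) = σ ^ 2 :=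
    Real.coe_toNNReal _ (sq_nonneg σ)
  have hw2 : (0:ℝ) < w ^ 2 := by positivity
  have hjoint : Measure.map (fun ω => (X ω, Y ω)) P
      = (gaussianReal 0 (Real.toNNReal (σ ^ 2))).prod (gaussianReal 0 (Real.toNNReal (σ ^ 2))) := by
    have h := (indepFun_iff_map_prod_eq_prod_map_map hX.aemeasurable hY.aemeasurable).mp hind
    rw [hXlaw, hYlaw] at h
    exact h
  have hSmeas : ∀ t : ℝ, MeasurableSet {p : ℝ × ℝ | t ≤ p.1 ^ 2 + p.2 ^ 2} := fun t =>
    measurableSet_le measurable_const ((measurable_fst.pow_const 2).add (measurable_snd.pow_const 2))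
  have key : ∀ c : ℝ, 0 < c → c ≤ A₀ →
      P {ω | A₀ * Real.exp (-2 * (X ω ^ 2 + Y ω ^ 2) / w ^ 2) ≤ c}
        = ENNReal.ofReal ((c / A₀) ^ ((w / (2 * σ)) ^ 2)) := by
    intro c hc hcA
    set t : ℝ := w ^ 2 / 2 * Real.log (A₀ / c) with htdef
    have ht : 0 ≤ t :=
      mul_nonneg (by positivity) (Real.log_nonneg ((one_le_div hc).mpr hcA))
    have hiff : ∀ s : ℝ, (A₀ * Real.exp (-2 * s / w ^ 2) ≤ c) ↔ t ≤ s := by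
      intro s
      rw [mul_comm, ← le_div_iff₀ hA₀, ← Real.exp_log (div_pos hc hA₀), Real.exp_le_exp,
        div_le_iff₀ hw2, htdef, Real.log_div hA₀.ne' hc.ne', Real.log_div hc.ne' hA₀.ne']
      constructor <;> intro h <;> nlinarith
    have hset : {ω | A₀ * Real.exp (-2 * (X ω ^ 2 + Y ω ^ 2) / w ^ 2) ≤ c}
        = (fun ω => (X ω, Y ω)) ⁻¹' {p : ℝ × ℝ | t ≤ p.1 ^ 2 + p.2 ^ 2} := by
      ext ω
      simp only [Set.mem_setOf_eq, Set.mem_preimage]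
      exact hiff _
    rw [hset, ← Measure.map_apply (hX.prodMk hY) (hSmeas t), hjoint, gauss2_tail hv ht]
    congr 1
    rw [Real.rpow_def_of_pos (div_pos hc hA₀), Real.log_div hc.ne' hA₀.ne', htdef,
      Real.log_div hA₀.ne' hc.ne', hvr]
    congr 1
    field_simp
    ring
  refine ⟨key, ?_⟩
  have hImeas : Measurable (fun ω => A₀ * Real.exp (-2 * (X ω ^ 2 + Y ω ^ 2) / w ^ 2)) := by
    have h1 : Measurable fun ω => -2 * (X ω ^ 2 + Y ω ^ 2) / w ^ 2 :=
      (((hX.pow_const 2).add (hY.pow_const 2)).const_mul (-2)).div_const _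
    exact (Real.measurable_exp.comp h1).const_mul A₀
  haveI : IsProbabilityMeasure
      (Measure.map (fun ω => A₀ * Real.exp (-2 * (X ω ^ 2 + Y ω ^ 2) / w ^ 2)) P) :=
    Measure.isProbabilityMeasure_map hImeas.aemeasurable
  refine Measure.ext_of_Iic _ _ (fun a => ?_)
  rw [Measure.map_apply hImeas measurableSet_Iic]
  by_cases ha : a ≤ 0
  · have hempty : (fun ω => A₀ * Real.exp (-2 * (X ω ^ 2 + Y ω ^ 2) / w ^ 2)) ⁻¹' Set.Iic a
        = (∅ : Set Ω) := by
      ext ω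
      simp only [Set.mem_preimage, Set.mem_Iic, Set.mem_empty_iff_false, iff_false, not_le]
      have : (0:ℝ) < A₀ * Real.exp (-2 * (X ω ^ 2 + Y ω ^ 2) / w ^ 2) := by positivity
      linarith
    rw [hempty, measure_empty]
    symm
    rw [pointingErrorMeasure, withDensity_apply _ measurableSet_Iic]
    rw [setLIntegral_congr_fun measurableSet_Iic
      (fun x hx => if_neg (fun hmem => absurd hmem.1 (by
        simp only [Set.mem_Iic] at hx; intro h; linarith)))]
    simp
  · push_neg at ha
    rcases le_or_gt a A₀ with hle | hgt
    · rw [show (fun ω => A₀ * Real.exp (-2 * (X ω ^ 2 + Y ω ^ 2) / w ^ 2)) ⁻¹' Set.Iic a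
          = {ω | A₀ * Real.exp (-2 * (X ω ^ 2 + Y ω ^ 2) / w ^ 2) ≤ a} from rfl,
        key a ha hle, pointing_Iic hξ hA₀ ha, min_eq_left hle]
    · have huniv : (fun ω => A₀ * Real.exp (-2 * (X ω ^ 2 + Y ω ^ 2) / w ^ 2)) ⁻¹' Set.Iic a
          = (Set.univ : Set Ω) := by
        ext ω
        simp only [Set.mem_preimage, Set.mem_Iic, Set.mem_univ, iff_true]
        have h1 : Real.exp (-2 * (X ω ^ 2 + Y ω ^ 2) / w ^ 2) ≤ 1 := by
          apply Real.exp_le_one_iff.mpr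
          have hs : (0:ℝ) ≤ X ω ^ 2 + Y ω ^ 2 := by positivity
          apply div_nonpos_of_nonpos_of_nonneg _ hw2.le
          nlinarith
        nlinarith [Real.exp_pos (-2 * (X ω ^ 2 + Y ω ^ 2) / w ^ 2)]
      rw [huniv, measure_univ, pointing_Iic hξ hA₀ ha, min_eq_right hgt.le,
        div_self hA₀.ne', Real.one_rpow, ENNReal.ofReal_one]
end
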